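/- arXiv:2510.20461 — 4 statements merged into one kernel-verified Lean document; each statement's English description precedes it below -/
import Mathlib

section
/- Let (c_x) be a monotone KCM constraint family of range r on Z^d satisfying the irreducibility assumption. Let μ and μ' be probability measures on Ω satisfying detailed balance, with μ' a product measure. Assume there is a stable configuration β such that μ({η : BP(η) = β}) = μ'({η : BP(η) = β}) = 1 (both measures are supported on the ergodic component of β) and lim_{N→∞} μ({η : BP^{Λ_N}(η|_{Λ_N}) = β|_{Λ_N}}) = lim_{N→∞} μ'({η : BP^{Λ_N}(η|_{Λ_N}) = β|_{Λ_N}}) = 1. Then μ = μ'. -/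
open MeasureTheory
open scoped Classical ENNReal

/-- Sites of the `d`-dimensional lattice `ℤ^d`. -/
abbrev Site (d : ℕ) : Type := Fin d → ℤ

/-- Configurations on `ℤ^d`: healthy = `true` (state 1), infected = `false` (state 0). -/
abbrev Cfg (d : ℕ) : Type := Site d → Bool

/-- The cylinder event of configurations agreeing with `ζ` on the finite set `Λ`. -/
def cyl (d : ℕ) (Λ : Finset (Site d)) (ζ : Cfg d) : Set (Cfg d) := {η | ∀ x ∈ Λ, η x = ζ x}

/-- A KCM constraint family of range `r`: `c x η` depends only on the states `η y`
for `0 < ‖y - x‖_∞ ≤ r` (in particular not on `η x`). -/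
def HasRange (d : ℕ) (c : Site d → Cfg d → ℝ) (r : ℕ) : Prop :=
  ∀ (x : Site d) (η η' : Cfg d),
    (∀ y : Site d, y ≠ x → (∀ i : Fin d, |y i - x i| ≤ (r : ℤ)) → η y = η' y) →
      c x η = c x η'

/-- The constraint family is monotone: more infections can only increase the rates. -/
def ConstraintMono (d : ℕ) (c : Site d → Cfg d → ℝ) : Prop :=
  ∀ (x : Site d) (η η' : Cfg d), η ≤ η' → c x η' ≤ c x η

/-- Extension of a configuration by healthy (`1`) boundary conditions outside `Λ`. -/
def extCfg (d : ℕ) (Λ : Finset (Site d)) (η : Cfg d) : Cfg d := fun x =>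
  if x ∈ Λ then η x else true

/-- One step of bootstrap percolation restricted to `Λ` (with healthy boundary conditions):
a site of `Λ` becomes infected if it is infected or its constraint is strictly positive. -/
noncomputable def bstepFin (d : ℕ) (c : Site d → Cfg d → ℝ) (Λ : Finset (Site d))
    (η : Cfg d) : Cfg d := fun x =>
  if x ∈ Λ then (η x && !decide (0 < c x η)) else η x

/-- `BP^Λ(η)`: the limit of bootstrap percolation restricted to `Λ`, applied to `η` extended
by `1` outside `Λ` (since each non-trivial step infects at least one new site of `Λ`,
`Λ.card` iterations reach the monotone limit). -/
noncomputable def BPfin (d : ℕ) (c : Site d → Cfg d → ℝ) (Λ : Finset (Site d))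
    (η : Cfg d) : Cfg d :=
  (bstepFin d c Λ)^[Λ.card] (extCfg d Λ η)

/-- One step of bootstrap percolation on the whole lattice. -/
noncomputable def bstep (d : ℕ) (c : Site d → Cfg d → ℝ) (η : Cfg d) : Cfg d := fun x =>
  η x && !decide (0 < c x η)

/-- `BP(η)`: the pointwise monotone limit of the bootstrap percolation iterates. -/
noncomputable def BP (d : ℕ) (c : Site d → Cfg d → ℝ) (η : Cfg d) : Cfg d := fun x =>
  decide (∀ n : ℕ, (bstep d c)^[n] η x = true)

/-- The configuration `η` flipped at `x`. -/
def flipAt (d : ℕ) (η : Cfg d) (x : Site d) : Cfg d := Function.update η x (!(η x))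

/-- A legal flip inside `Λ`: a flip at a site `x ∈ Λ` whose constraint (evaluated on the
current configuration, which is extended by `1` outside `Λ`) is strictly positive. -/
def LegalStep (d : ℕ) (c : Site d → Cfg d → ℝ) (Λ : Finset (Site d)) (η η' : Cfg d) : Prop :=
  ∃ x ∈ Λ, 0 < c x η ∧ η' = flipAt d η x

/-- Irreducibility assumption: within every finite volume `Λ` (with healthy boundary
conditions), any two configurations with the same restricted bootstrap limit are connected
by a chain of legal flips. -/
def IrreducibleKCM (d : ℕ) (c : Site d → Cfg d → ℝ) : Prop :=
  ∀ (Λ : Finset (Site d)) (ζ ζ' : Cfg d), BPfin d c Λ ζ = BPfin d c Λ ζ' →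
    Relation.ReflTransGen (LegalStep d c Λ) (extCfg d Λ ζ) (extCfg d Λ ζ')

/-- Detailed balance for `μ`: for every finite `Λ`, every `x` with `x + [-r,r]^d ⊆ Λ`, and
every `ζ ∈ {0,1}^Λ`, `c_x(ζ) π_Λ(ζ^x) μ(η|_Λ = ζ) = c_x(ζ) π_Λ(ζ) μ(η|_Λ = ζ^x)`. -/
def DetailedBalance (d : ℕ) (c : Site d → Cfg d → ℝ) (p : ℝ) (r : ℕ)
    (μ : Measure (Cfg d)) : Prop :=
  ∀ (Λ : Finset (Site d)) (x : Site d),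
    (∀ y : Site d, (∀ i : Fin d, |y i - x i| ≤ (r : ℤ)) → y ∈ Λ) →
    ∀ ζ : Cfg d,
      c x ζ * (∏ y ∈ Λ, if flipAt d ζ x y then p else 1 - p) * (μ (cyl d Λ ζ)).toReal
        = c x ζ * (∏ y ∈ Λ, if ζ y then p else 1 - p) *
            (μ (cyl d Λ (flipAt d ζ x))).toReal

/-- `ν` is the product measure on `{0,1}^{ℤ^d}` with marginals `ν(η_x = 1) = m x`. -/
def IsProd (d : ℕ) (m : Site d → ℝ) (ν : Measure (Cfg d)) : Prop :=
  IsProbabilityMeasure ν ∧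
    ∀ (Λ : Finset (Site d)) (ζ : Cfg d),
      ν (cyl d Λ ζ) = ∏ x ∈ Λ, ENNReal.ofReal (if ζ x then m x else 1 - m x)

/-- The box `Λ_N = [-N,N]^d ∩ ℤ^d`. -/
noncomputable def box (d : ℕ) (N : ℕ) : Finset (Site d) :=
  Fintype.piFinset fun _ : Fin d => Finset.Icc (-(N : ℤ)) (N : ℤ)

/-!
Fix a cylinder event `C`, let `A_M` be the event that `BP^{Λ_M}` agrees with `β` on `Λ_M`, and let
`B` be `Λ_M` enlarged by `r`. Inside `A_M`, two configurations that coincide outside `Λ_M` are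
joined by legal flips in `Λ_M` (irreducibility; monotonicity of the constraints lets the chain
run under any boundary condition), and detailed balance makes `μ(η|_B) / π_B(η|_B)` invariant
along legal flips. Exchanging the `Λ_M`-parts of pairs of configurations therefore gives
`μ(A_M ∩ C) π(A_M) = μ(A_M) π(A_M ∩ C)`: conditioned on `A_M`, every reversible measure has the
same law inside `Λ_M`. Hence `μ(A_M ∩ C) μ'(A_M) = μ'(A_M ∩ C) μ(A_M)`, and `M → ∞` gives
`μ(C) = μ'(C)`.
-/

open Filter Topology Relation

namespace KCM

section Splice

variable {ι α : Type*} [DecidableEq ι]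

lemma prod_piecewise_mul_prod_piecewise {M : Type*} [CommMonoid M] (s B : Finset ι)
    (g : ι → α → M) (σ τ : ι → α) :
    (∏ i ∈ B, g i (s.piecewise σ τ i)) * ∏ i ∈ B, g i (s.piecewise τ σ i)
      = (∏ i ∈ B, g i (σ i)) * ∏ i ∈ B, g i (τ i) := by
  rw [← Finset.prod_mul_distrib, ← Finset.prod_mul_distrib]
  refine Finset.prod_congr rfl fun i _ => ?_
  by_cases hi : i ∈ s <;> simp [hi, mul_comm]

/-- If `f / w` depends only on the coordinates outside `s`, exchanging the `s`-parts of pairs is a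
bijection `S × T ≃ T × S` that preserves `f σ * w τ`. -/
theorem sum_mul_sum_eq_of_div_invariant (s : Finset ι) {S T : Finset (ι → α)}
    (f w : (ι → α) → ℝ) (hw : ∀ σ, 0 < w σ)
    (hw_swap : ∀ σ τ, w (s.piecewise σ τ) * w (s.piecewise τ σ) = w σ * w τ)
    (hTS : T ⊆ S) (hS : ∀ σ ∈ S, ∀ τ ∈ S, s.piecewise σ τ ∈ S)
    (hT : ∀ σ ∈ T, ∀ τ ∈ S, s.piecewise σ τ ∈ T)
    (hf : ∀ σ ∈ S, ∀ τ ∈ S, (∀ i ∉ s, σ i = τ i) → f σ / w σ = f τ / w τ) :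
    (∑ σ ∈ S, f σ) * ∑ σ ∈ T, w σ = (∑ σ ∈ T, f σ) * ∑ σ ∈ S, w σ := by
  have hinv : ∀ σ τ : ι → α, s.piecewise (s.piecewise σ τ) (s.piecewise τ σ) = σ := by
    intro σ τ
    ext i
    by_cases hi : i ∈ s <;> simp [hi]
  rw [Finset.sum_mul_sum, Finset.sum_mul_sum, ← Finset.sum_product', ← Finset.sum_product']
  refine Finset.sum_nbij' (fun x => (s.piecewise x.2 x.1, s.piecewise x.1 x.2))
    (fun x => (s.piecewise x.2 x.1, s.piecewise x.1 x.2)) ?_ ?_ ?_ ?_ ?_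
  · rintro ⟨σ, τ⟩ h
    rw [Finset.mem_product] at h ⊢
    exact ⟨hT τ h.2 σ h.1, hS σ h.1 τ (hTS h.2)⟩
  · rintro ⟨σ, τ⟩ h
    rw [Finset.mem_product] at h ⊢
    exact ⟨hS τ h.2 σ (hTS h.1), hT σ h.1 τ h.2⟩
  · rintro ⟨σ, τ⟩ -
    simp [hinv]
  · rintro ⟨σ, τ⟩ -
    simp [hinv]
  · rintro ⟨σ, τ⟩ h
    rw [Finset.mem_product] at h
    have hτσ := hS τ (hTS h.2) σ h.1
    have hratio := hf σ h.1 _ hτσ fun i hi => (Finset.piecewise_eq_of_notMem _ _ _ hi).symm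
    rw [div_eq_div_iff (hw _).ne' (hw _).ne'] at hratio
    apply mul_right_cancel₀ (hw (s.piecewise τ σ)).ne'
    linear_combination w τ * hratio - f (s.piecewise τ σ) * hw_swap τ σ

end Splice

lemma DependsOn.mem_inter {ι : Type*} {α : ι → Type*} {s : Set ι} {A C : Set (Π i, α i)}
    (hA : DependsOn (· ∈ A) s) (hC : DependsOn (· ∈ C) s) : DependsOn (· ∈ A ∩ C) s :=
  fun _ _ h => by simp only [Set.mem_inter_iff, hA h, hC h]

variable {d : ℕ}

lemma mem_box {N : ℕ} {x : Site d} : x ∈ box d N ↔ ∀ i, |x i| ≤ N := by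
  simp [box, Fintype.mem_piFinset, abs_le, and_comm]

lemma box_mono : Monotone (box d) := fun _ _ h _ hx =>
  mem_box.2 fun i => (mem_box.1 hx i).trans (by exact_mod_cast h)

lemma exists_subset_box (Λ : Finset (Site d)) : ∃ N, Λ ⊆ box d N := by
  refine ⟨Λ.sup fun x => Finset.univ.sup fun i => (x i).natAbs,
    fun x hx => mem_box.2 fun i => ?_⟩
  have := (Finset.le_sup (f := fun i => (x i).natAbs) (Finset.mem_univ i)).trans
    (Finset.le_sup (f := fun x : Site d => Finset.univ.sup fun i => (x i).natAbs) hx)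
  rw [Int.abs_eq_natAbs]
  exact_mod_cast this

def NbhdSubset (r : ℕ) (Λ B : Finset (Site d)) : Prop :=
  ∀ x ∈ Λ, ∀ y : Site d, (∀ i, |y i - x i| ≤ (r : ℤ)) → y ∈ B

lemma NbhdSubset.subset {r : ℕ} {Λ B : Finset (Site d)} (h : NbhdSubset r Λ B) : Λ ⊆ B :=
  fun x hx => h x hx x fun i => by simp

lemma nbhdSubset_box (M r : ℕ) : NbhdSubset r (box d M) (box d (M + r)) :=
  fun x hx y hy => mem_box.2 fun i => by
    push_cast
    linarith [abs_sub_abs_le_abs_sub (y i) (x i), mem_box.1 hx i, hy i]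

lemma measurableSet_cyl (Λ : Finset (Site d)) (ζ : Cfg d) : MeasurableSet (cyl d Λ ζ) := by
  simp only [cyl, Set.ofPred_forall]
  exact .biInter Λ.countable_toSet fun x _ =>
    measurableSet_eq_fun (measurable_pi_apply x) measurable_const

lemma extCfg_congr {Λ : Finset (Site d)} {η η' : Cfg d} (h : ∀ x ∈ Λ, η x = η' x) :
    extCfg d Λ η = extCfg d Λ η' :=
  funext fun x => by by_cases hx : x ∈ Λ <;> simp [extCfg, hx, h]

lemma dependsOn_mem_cyl (Λ : Finset (Site d)) (ζ : Cfg d) :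
    DependsOn (· ∈ cyl d Λ ζ) (Λ : Set (Site d)) := fun η η' h => by
  simp only [cyl, Set.mem_ofPred_eq]
  exact propext ⟨fun hη x hx => (h x hx).symm.trans (hη x hx),
    fun hη' x hx => (h x hx).trans (hη' x hx)⟩

lemma mem_cyl_extCfg (Λ : Finset (Site d)) (η : Cfg d) : η ∈ cyl d Λ (extCfg d Λ η) :=
  fun _ hx => (if_pos hx).symm

/-- One representative per cylinder on `B`: the configuration healthy outside `B`. -/
noncomputable def patterns (B : Finset (Site d)) : Finset (Cfg d) :=
  Finset.univ.image fun σ : B → Bool => fun x => if h : x ∈ B then σ ⟨x, h⟩ else true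

lemma mem_patterns {B : Finset (Site d)} {η : Cfg d} :
    η ∈ patterns B ↔ ∀ x ∉ B, η x = true := by
  simp only [patterns, Finset.mem_image, Finset.mem_univ, true_and]
  constructor
  · rintro ⟨σ, rfl⟩ x hx
    simp [hx]
  · intro h
    exact ⟨fun x => η x, funext fun x => by by_cases hx : x ∈ B <;> simp [hx, h]⟩

lemma extCfg_mem_patterns (B : Finset (Site d)) (η : Cfg d) : extCfg d B η ∈ patterns B :=
  mem_patterns.2 fun _ hx => if_neg hx

lemma piecewise_mem_patterns {Λ B : Finset (Site d)} (hΛB : Λ ⊆ B) (η : Cfg d)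
    {ξ : Cfg d} (hξ : ξ ∈ patterns B) : Λ.piecewise η ξ ∈ patterns B :=
  mem_patterns.2 fun x hx => by
    rw [Finset.piecewise_eq_of_notMem _ _ _ fun h => hx (hΛB h)]
    exact mem_patterns.1 hξ x hx

lemma disjoint_cyl {B : Finset (Site d)} {ξ ξ' : Cfg d} (hξ : ξ ∈ patterns B)
    (hξ' : ξ' ∈ patterns B) (hne : ξ ≠ ξ') : Disjoint (cyl d B ξ) (cyl d B ξ') :=
  Set.disjoint_left.2 fun η h h' => hne <| funext fun x => by
    by_cases hx : x ∈ B
    · exact (h x hx).symm.trans (h' x hx)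
    · rw [mem_patterns.1 hξ x hx, mem_patterns.1 hξ' x hx]

theorem measure_eq_sum_cyl (μ : Measure (Cfg d)) {B : Finset (Site d)} {S : Set (Cfg d)}
    (hS : DependsOn (· ∈ S) (B : Set (Site d))) :
    μ S = ∑ η ∈ (patterns B).filter (· ∈ S), μ (cyl d B η) := by
  have hU : S = ⋃ η ∈ (patterns B).filter (· ∈ S), cyl d B η := by
    ext η
    simp only [Set.mem_iUnion, Finset.mem_filter, exists_prop]
    constructor
    · intro h
      exact ⟨extCfg d B η, ⟨extCfg_mem_patterns B η,
        (hS fun x hx => (mem_cyl_extCfg B η x hx)).mp h⟩, mem_cyl_extCfg B η⟩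
    · rintro ⟨ξ, ⟨-, hξ⟩, hη⟩
      exact (hS fun x hx => (hη x hx).symm).mp hξ
  conv_lhs => rw [hU]
  exact measure_biUnion_finset
    (fun ξ hξ ξ' hξ' hne =>
      disjoint_cyl (Finset.mem_filter.1 hξ).1 (Finset.mem_filter.1 hξ').1 hne)
    fun ξ _ => measurableSet_cyl B ξ

theorem ext_of_measure_cyl_eq {μ ν : Measure (Cfg d)} [IsFiniteMeasure μ]
    (h : ∀ Λ ζ, μ (cyl d Λ ζ) = ν (cyl d Λ ζ)) : μ = ν := by
  refine ext_of_generate_finite _ generateFrom_measurableCylinders.symm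
    isPiSystem_measurableCylinders (fun s hs => ?_) ?_
  · obtain ⟨I, S, -, rfl⟩ := (mem_measurableCylinders s).1 hs
    have hI : DependsOn (· ∈ cylinder (α := fun _ => Bool) I S) (I : Set (Site d)) :=
      fun η η' hηη' => by
      simp only [mem_cylinder]
      rw [show I.restrict η = I.restrict η' from funext fun i => hηη' i i.2]
    rw [measure_eq_sum_cyl μ hI, measure_eq_sum_cyl ν hI]
    exact Finset.sum_congr rfl fun η _ => h I η
  · have : (Set.univ : Set (Cfg d)) = cyl d ∅ fun _ => true := by simp [cyl]
    rw [this, h]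

section Dynamics

variable {c : Site d → Cfg d → ℝ} {Λ : Finset (Site d)} {η η' : Cfg d}

lemma BPfin_congr (h : ∀ x ∈ Λ, η x = η' x) : BPfin d c Λ η = BPfin d c Λ η' := by
  rw [BPfin, BPfin, extCfg_congr h]

lemma BPfin_of_notMem {x : Site d} (hx : x ∉ Λ) : BPfin d c Λ η x = true := by
  have key : ∀ n, (bstepFin d c Λ)^[n] (extCfg d Λ η) x = true := by
    intro n
    induction n with
    | zero => exact if_neg hx
    | succ n ih => rw [Function.iterate_succ_apply', bstepFin, if_neg hx, ih]
  exact key _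

def bpEvent (c : Site d → Cfg d → ℝ) (Λ : Finset (Site d)) (β : Cfg d) : Set (Cfg d) :=
  {η | ∀ x ∈ Λ, BPfin d c Λ η x = β x}

lemma dependsOn_mem_bpEvent (β : Cfg d) :
    DependsOn (· ∈ bpEvent c Λ β) (Λ : Set (Site d)) := fun η η' h => by
  simp only [bpEvent, Set.mem_ofPred_eq, BPfin_congr h]

lemma BPfin_eq_of_mem_bpEvent {β η η' : Cfg d} (hη : η ∈ bpEvent c Λ β)
    (hη' : η' ∈ bpEvent c Λ β) : BPfin d c Λ η = BPfin d c Λ η' :=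
  funext fun x => by
    by_cases hx : x ∈ Λ
    · rw [hη x hx, hη' x hx]
    · rw [BPfin_of_notMem hx, BPfin_of_notMem hx]

lemma LegalStep.apply_of_notMem (h : LegalStep d c Λ η η') {x : Site d} (hx : x ∉ Λ) :
    η' x = η x := by
  obtain ⟨y, hy, -, rfl⟩ := h
  exact Function.update_of_ne (ne_of_mem_of_not_mem hy hx).symm _ _

lemma reflTransGen_legalStep_apply_of_notMem (h : ReflTransGen (LegalStep d c Λ) η η')
    {x : Site d} (hx : x ∉ Λ) : η' x = η x := by
  induction h with
  | refl => rfl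
  | tail _ hstep ih => exact (LegalStep.apply_of_notMem hstep hx).trans ih

lemma LegalStep.piecewise (hmono : ConstraintMono d c) (h : LegalStep d c Λ η η')
    (hη : ∀ x ∉ Λ, η x = true) (g : Cfg d) :
    LegalStep d c Λ (Λ.piecewise η g) (Λ.piecewise η' g) := by
  obtain ⟨x, hx, hc, rfl⟩ := h
  refine ⟨x, hx, hc.trans_le (hmono x _ _ fun y => ?_), ?_⟩
  · by_cases hy : y ∈ Λ <;> simp [hy, hη]
  · rw [flipAt, flipAt, Finset.piecewise_eq_of_mem _ _ _ hx,
      Finset.update_piecewise_of_mem _ _ _ hx]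

lemma reflTransGen_legalStep_piecewise (hmono : ConstraintMono d c)
    (h : ReflTransGen (LegalStep d c Λ) η η') (hη : ∀ x ∉ Λ, η x = true) (g : Cfg d) :
    ReflTransGen (LegalStep d c Λ) (Λ.piecewise η g) (Λ.piecewise η' g) := by
  induction h with
  | refl => exact .refl
  | tail hchain hstep ih =>
    exact ih.tail <| LegalStep.piecewise hmono hstep
      (fun x hx => (reflTransGen_legalStep_apply_of_notMem hchain hx).trans (hη x hx)) g

theorem IrreducibleKCM.reflTransGen (hirr : IrreducibleKCM d c) (hmono : ConstraintMono d c)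
    (hBP : BPfin d c Λ η = BPfin d c Λ η') (hout : ∀ x ∉ Λ, η x = η' x) :
    ReflTransGen (LegalStep d c Λ) η η' := by
  have h := reflTransGen_legalStep_piecewise hmono (hirr Λ η η' hBP) (fun _ hx => if_neg hx) η
  have hext : ∀ ξ, (∀ x ∉ Λ, η x = ξ x) → Λ.piecewise (extCfg d Λ ξ) η = ξ := fun ξ hξ =>
    funext fun x => by by_cases hx : x ∈ Λ <;> simp [extCfg, hx, hξ]
  rwa [hext η fun _ _ => rfl, hext η' hout] at h

end Dynamics

section Bernoulli

variable {p : ℝ}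

def bernoulliWeight (p : ℝ) (B : Finset (Site d)) (η : Cfg d) : ℝ :=
  ∏ y ∈ B, if η y then p else 1 - p

noncomputable def bernoulliMass (p : ℝ) (B : Finset (Site d)) (S : Set (Cfg d)) : ℝ :=
  ∑ η ∈ (patterns B).filter (· ∈ S), bernoulliWeight p B η

lemma bernoulliWeight_pos (hp0 : 0 < p) (hp1 : p < 1) (B : Finset (Site d)) (η : Cfg d) :
    0 < bernoulliWeight p B η :=
  Finset.prod_pos fun y _ => by split_ifs <;> linarith

lemma bernoulliMass_pos (hp0 : 0 < p) (hp1 : p < 1) {B : Finset (Site d)} {S : Set (Cfg d)}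
    (hS : DependsOn (· ∈ S) (B : Set (Site d))) (hne : S.Nonempty) :
    0 < bernoulliMass p B S := by
  obtain ⟨η, hη⟩ := hne
  refine Finset.sum_pos (fun _ _ => bernoulliWeight_pos hp0 hp1 B _) ⟨extCfg d B η, ?_⟩
  exact Finset.mem_filter.2
    ⟨extCfg_mem_patterns B η, (hS fun x hx => mem_cyl_extCfg B η x hx).mp hη⟩

end Bernoulli

section DetailedBalance

variable {c : Site d → Cfg d → ℝ} {p : ℝ} {r : ℕ} {μ : Measure (Cfg d)}
  {Λ B : Finset (Site d)} {η η' : Cfg d}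

lemma DetailedBalance.div_eq_of_legalStep (hdb : DetailedBalance d c p r μ) (hp0 : 0 < p)
    (hp1 : p < 1) (hB : NbhdSubset r Λ B)
    (h : LegalStep d c Λ η η') :
    μ.real (cyl d B η) / bernoulliWeight p B η = μ.real (cyl d B η') / bernoulliWeight p B η' := by
  obtain ⟨x, hx, hc, rfl⟩ := h
  have hbal := hdb B x (hB x hx) η
  simp only [mul_assoc] at hbal
  have hbal := mul_left_cancel₀ hc.ne' hbal
  rw [div_eq_div_iff (bernoulliWeight_pos hp0 hp1 B _).ne' (bernoulliWeight_pos hp0 hp1 B _).ne']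
  simp only [measureReal_def, bernoulliWeight]
  linarith

lemma DetailedBalance.div_eq_of_reflTransGen (hdb : DetailedBalance d c p r μ) (hp0 : 0 < p)
    (hp1 : p < 1) (hB : NbhdSubset r Λ B)
    (h : ReflTransGen (LegalStep d c Λ) η η') :
    μ.real (cyl d B η) / bernoulliWeight p B η = μ.real (cyl d B η') / bernoulliWeight p B η' := by
  induction h with
  | refl => rfl
  | tail _ hstep ih => exact ih.trans (DetailedBalance.div_eq_of_legalStep hdb hp0 hp1 hB hstep)

end DetailedBalance

section Uniqueness

variable {c : Site d → Cfg d → ℝ} {p : ℝ} {r : ℕ} {Λ B : Finset (Site d)} {A T : Set (Cfg d)}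

theorem measureReal_mul_bernoulliMass_eq (hp0 : 0 < p) (hp1 : p < 1) (hmono : ConstraintMono d c)
    (hirr : IrreducibleKCM d c) {μ : Measure (Cfg d)} [IsFiniteMeasure μ]
    (hdb : DetailedBalance d c p r μ) (hB : NbhdSubset r Λ B)
    (hA : DependsOn (· ∈ A) (Λ : Set (Site d))) (hT : DependsOn (· ∈ T) (Λ : Set (Site d)))
    (hTA : T ⊆ A) (hBP : ∀ η ∈ A, ∀ η' ∈ A, BPfin d c Λ η = BPfin d c Λ η') :
    μ.real A * bernoulliMass p B T = μ.real T * bernoulliMass p B A := by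
  have hdec : ∀ S : Set (Cfg d), DependsOn (· ∈ S) (Λ : Set (Site d)) →
      μ.real S = ∑ η ∈ (patterns B).filter (· ∈ S), μ.real (cyl d B η) := fun S hS => by
    rw [measureReal_def, measure_eq_sum_cyl μ (hS.mono (Finset.coe_subset.2 hB.subset)),
      ENNReal.toReal_sum fun _ _ => measure_ne_top _ _]
    rfl
  have hsplice : ∀ S : Set (Cfg d), DependsOn (· ∈ S) (Λ : Set (Site d)) →
      ∀ η ∈ (patterns B).filter (· ∈ S), ∀ ξ ∈ patterns B,
        Λ.piecewise η ξ ∈ (patterns B).filter (· ∈ S) := by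
    intro S hS η hη ξ hξ
    rw [Finset.mem_filter] at hη ⊢
    exact ⟨piecewise_mem_patterns hB.subset η hξ,
      (hS fun x hx => (Finset.piecewise_eq_of_mem _ _ _ hx).symm).mp hη.2⟩
  rw [hdec A hA, hdec T hT]
  refine sum_mul_sum_eq_of_div_invariant Λ _ _ (bernoulliWeight_pos hp0 hp1 B)
    (fun σ τ => prod_piecewise_mul_prod_piecewise Λ B (fun _ b => if b then p else 1 - p) σ τ)
    (fun η hη => ?_) (fun σ hσ τ hτ => hsplice A hA σ hσ τ (Finset.mem_filter.1 hτ).1)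
    (fun σ hσ τ hτ => hsplice T hT σ hσ τ (Finset.mem_filter.1 hτ).1) fun σ hσ τ hτ hout => ?_
  · rw [Finset.mem_filter] at hη ⊢
    exact ⟨hη.1, hTA hη.2⟩
  · rw [Finset.mem_filter] at hσ hτ
    exact DetailedBalance.div_eq_of_reflTransGen hdb hp0 hp1 hB
      (IrreducibleKCM.reflTransGen hirr hmono (hBP σ hσ.2 τ hτ.2) hout)

theorem measureReal_mul_measureReal_eq (hp0 : 0 < p) (hp1 : p < 1) (hmono : ConstraintMono d c)
    (hirr : IrreducibleKCM d c) {μ μ' : Measure (Cfg d)} [IsFiniteMeasure μ] [IsFiniteMeasure μ']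
    (hdb : DetailedBalance d c p r μ) (hdb' : DetailedBalance d c p r μ') (hB : NbhdSubset r Λ B)
    (hA : DependsOn (· ∈ A) (Λ : Set (Site d))) (hT : DependsOn (· ∈ T) (Λ : Set (Site d)))
    (hTA : T ⊆ A) (hBP : ∀ η ∈ A, ∀ η' ∈ A, BPfin d c Λ η = BPfin d c Λ η') :
    μ.real A * μ'.real T = μ'.real A * μ.real T := by
  rcases A.eq_empty_or_nonempty with rfl | hne
  · simp
  have hW := bernoulliMass_pos hp0 hp1 (hA.mono (Finset.coe_subset.2 hB.subset)) hne
  have h := measureReal_mul_bernoulliMass_eq hp0 hp1 hmono hirr hdb hB hA hT hTA hBP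
  have h' := measureReal_mul_bernoulliMass_eq hp0 hp1 hmono hirr hdb' hB hA hT hTA hBP
  apply mul_right_cancel₀ hW.ne'
  linear_combination μ'.real A * h - μ.real A * h'

lemma tendsto_measureReal_inter_of_tendsto_one {α ι : Type*} [MeasurableSpace α]
    {ν : Measure α} [IsProbabilityMeasure ν] {l : Filter ι} {A : ι → Set α} {C : Set α}
    (hA : Tendsto (fun i => ν.real (A i)) l (𝓝 1)) (hC : MeasurableSet C) :
    Tendsto (fun i => ν.real (A i ∩ C)) l (𝓝 (ν.real C)) := by
  have hlow : Tendsto (fun i => ν.real (A i) + ν.real C - 1) l (𝓝 (ν.real C)) := by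
    simpa using (hA.add_const (ν.real C)).sub_const 1
  refine tendsto_of_tendsto_of_tendsto_of_le_of_le hlow tendsto_const_nhds (fun i => ?_)
    fun i => measureReal_mono Set.inter_subset_right
  linarith [measureReal_union_add_inter (μ := ν) (s := A i) hC,
    measureReal_le_one (μ := ν) (s := A i ∪ C)]

theorem measure_cyl_eq_of_tendsto (hp0 : 0 < p) (hp1 : p < 1) (hmono : ConstraintMono d c)
    (hirr : IrreducibleKCM d c) {μ μ' : Measure (Cfg d)} [IsProbabilityMeasure μ]
    [IsProbabilityMeasure μ'] (hdb : DetailedBalance d c p r μ)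
    (hdb' : DetailedBalance d c p r μ') {β : Cfg d}
    (hlim : Tendsto (fun N => μ (bpEvent c (box d N) β)) atTop (𝓝 1))
    (hlim' : Tendsto (fun N => μ' (bpEvent c (box d N) β)) atTop (𝓝 1))
    (Λ : Finset (Site d)) (ζ : Cfg d) : μ (cyl d Λ ζ) = μ' (cyl d Λ ζ) := by
  set E := fun N => bpEvent c (box d N) β
  set C := cyl d Λ ζ
  obtain ⟨N, hN⟩ := exists_subset_box Λ
  have hcross : ∀ᶠ M in atTop,
      μ'.real (E M) * μ.real (E M ∩ C) = μ.real (E M) * μ'.real (E M ∩ C) := by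
    filter_upwards [eventually_ge_atTop N] with M hM
    have hC := (dependsOn_mem_cyl Λ ζ).mono (Finset.coe_subset.2 (hN.trans (box_mono hM)))
    exact measureReal_mul_measureReal_eq hp0 hp1 hmono hirr hdb' hdb (nbhdSubset_box M r)
      (dependsOn_mem_bpEvent β) (DependsOn.mem_inter (dependsOn_mem_bpEvent β) hC)
      Set.inter_subset_left
      fun η hη η' hη' => BPfin_eq_of_mem_bpEvent hη hη'
  have hE : Tendsto (fun M => μ.real (E M)) atTop (𝓝 1) := by
    rw [← ENNReal.toReal_one]
    exact (ENNReal.tendsto_toReal ENNReal.one_ne_top).comp hlim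
  have hE' : Tendsto (fun M => μ'.real (E M)) atTop (𝓝 1) := by
    rw [← ENNReal.toReal_one]
    exact (ENNReal.tendsto_toReal ENNReal.one_ne_top).comp hlim'
  have h : Tendsto (fun M => μ'.real (E M) * μ.real (E M ∩ C)) atTop (𝓝 (μ.real C)) := by
    simpa using hE'.mul (tendsto_measureReal_inter_of_tendsto_one hE (measurableSet_cyl Λ ζ))
  have h' : Tendsto (fun M => μ.real (E M) * μ'.real (E M ∩ C)) atTop (𝓝 (μ'.real C)) := by
    simpa using hE.mul (tendsto_measureReal_inter_of_tendsto_one hE' (measurableSet_cyl Λ ζ))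
  exact (measureReal_eq_measureReal_iff (measure_ne_top _ _) (measure_ne_top _ _)).1
    (tendsto_nhds_unique (h.congr' hcross) h')

end Uniqueness

end KCM

theorem stmt6_general (d : ℕ) (q p : ℝ) (hq0 : 0 < q) (hq1 : q < 1) (hp : p = 1 - q)
    (r : ℕ) (c : Site d → Cfg d → ℝ) (hmono : ConstraintMono d c) (hirr : IrreducibleKCM d c)
    (μ μ' : Measure (Cfg d))
    (hμ : IsProbabilityMeasure μ) (hμ' : IsProbabilityMeasure μ')
    (hdb : DetailedBalance d c p r μ) (hdb' : DetailedBalance d c p r μ')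
    (β : Cfg d)
    (hlim : Filter.Tendsto
      (fun N : ℕ => μ {η | ∀ x ∈ box d N, BPfin d c (box d N) η x = β x})
      Filter.atTop (nhds 1))
    (hlim' : Filter.Tendsto
      (fun N : ℕ => μ' {η | ∀ x ∈ box d N, BPfin d c (box d N) η x = β x})
      Filter.atTop (nhds 1)) :
    μ = μ' := by
  have hp0 : 0 < p := by linarith
  have hp1 : p < 1 := by linarith
  exact KCM.ext_of_measure_cyl_eq fun Λ ζ =>
    KCM.measure_cyl_eq_of_tendsto hp0 hp1 hmono hirr hdb hdb' hlim hlim' Λ ζ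

/-- internal spanning: let `(c_x)` be a monotone KCM constraint family of
range `r` on `ℤ^d` satisfying the irreducibility assumption, and let `μ, μ'` satisfy
detailed balance, with `μ'` a product measure. If both are supported on the ergodic
component of a stable configuration `β` and
`μ(BP^{Λ_N}(η|_{Λ_N}) = β|_{Λ_N}) → 1`, `μ'(BP^{Λ_N}(η|_{Λ_N}) = β|_{Λ_N}) → 1`
as `N → ∞`, then `μ = μ'`. -/
theorem stmt6 (d : ℕ) (q p : ℝ) (hq0 : 0 < q) (hq1 : q < 1) (hp : p = 1 - q)
    (r : ℕ) (c : Site d → Cfg d → ℝ) (hrange : HasRange d c r)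
    (hc0 : ∀ x η, 0 ≤ c x η) (hmono : ConstraintMono d c) (hirr : IrreducibleKCM d c)
    (μ μ' : Measure (Cfg d))
    (hμ : IsProbabilityMeasure μ) (hμ' : IsProbabilityMeasure μ')
    (hdb : DetailedBalance d c p r μ) (hdb' : DetailedBalance d c p r μ')
    (hprod : ∃ m : Site d → ℝ, (∀ x, 0 ≤ m x ∧ m x ≤ 1) ∧ IsProd d m μ')
    (β : Cfg d) (hβ : BP d c β = β)
    (hsupp : μ {η | BP d c η = β} = 1) (hsupp' : μ' {η | BP d c η = β} = 1)
    (hlim : Filter.Tendsto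
      (fun N : ℕ => μ {η | ∀ x ∈ box d N, BPfin d c (box d N) η x = β x})
      Filter.atTop (nhds 1))
    (hlim' : Filter.Tendsto
      (fun N : ℕ => μ' {η | ∀ x ∈ box d N, BPfin d c (box d N) η x = β x})
      Filter.atTop (nhds 1)) :
    μ = μ' :=
  stmt6_general d q p hq0 hq1 hp r c hmono hirr μ μ' hμ hμ' hdb hdb' β hlim hlim'
end

section
/- Let (c_x) be a monotone KCM constraint family of range r on Z^d satisfying the irreducibility assumption, and suppose that lim_{N→∞} π({η : BP^{Λ_N}(η|_{Λ_N}) = 0_{Λ_N}}) = 1, where 0_{Λ_N} is the fully infected configuration on Λ_N. Let μ be a probability measure on Ω satisfying detailed balance such that BP(η) = 0 (the fully infected configuration of Ω) μ-almost surely. Then μ = π. -/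
open MeasureTheory
open scoped Classical ENNReal

/-!
Detailed balance and monotonicity of the constraints show that a legal flip inside a finite
volume `Λ` (with healthy boundary) preserves the ratio `μ(η|_Λ) / π_Λ(η)`; by irreducibility
this ratio is constant on every class of configurations with the same restricted bootstrap
limit `BP^Λ`. If bootstrap percolation in `Λ_M` infects `Λ_N`, infecting `Λ_N` beforehand does
not change that limit, so on this event the density of `μ` factorises as "configuration outside
`Λ_N` with `Λ_N` infected" times `π_{Λ_N}`. Summing over configurations gives
`μ(E_{N,M}) · π(A ∩ G_N) ≤ μ(A)` for every event `A` depending on `Λ_N`, where `E_{N,M}` is the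
event that bootstrap in `Λ_M` infects `Λ_N` and `G_N` the event that `Λ_N` is internally
spanned. Bootstrap percolation has finite speed and `BP = 0` `μ`-a.s., so `μ(E_{N,M}) → 1` as
`M → ∞`; together with `π(G_N) → 1` this yields `π ≤ μ` on cylinders, hence `μ = π`.
-/

open Finset hiding box
open Filter Topology Function

lemma isFixedPt_iterate_of_potential {α : Type*} {f : α → α} (φ : α → ℕ) {K : ℕ}
    (hφ : ∀ a, φ a ≤ K) (hf : ∀ a, f a ≠ a → φ a < φ (f a)) (a : α) :
    IsFixedPt f (f^[K] a) := by
  have key : ∀ n, IsFixedPt f (f^[n] a) ∨ n ≤ φ (f^[n] a) := by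
    intro n
    induction n with
    | zero => exact Or.inr (Nat.zero_le _)
    | succ n ih =>
      by_cases hfix : IsFixedPt f (f^[n] a)
      · left
        rw [iterate_succ_apply', hfix.eq]
        exact hfix
      · right
        rw [iterate_succ_apply']
        exact (ih.resolve_left hfix).trans_lt (hf _ hfix)
  refine (key K).elim id fun hK => by_contra fun hfix => ?_
  exact (hK.trans_lt (hf _ hfix)).not_ge (hφ _)

lemma Finset.sum_powerset_union {α M : Type*} [DecidableEq α] [AddCommMonoid M]
    {s t : Finset α} (h : Disjoint s t) (f : Finset α → M) :
    ∑ T ∈ (s ∪ t).powerset, f T = ∑ S ∈ s.powerset, ∑ J ∈ t.powerset, f (S ∪ J) := by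
  rw [← sum_product']
  refine sum_nbij' (fun T => (T ∩ s, T ∩ t)) (fun P => P.1 ∪ P.2) ?_ ?_ ?_ ?_ fun T hT => ?_
  · simp
  · simp only [mem_product, mem_powerset, and_imp, Prod.forall]
    exact fun S J hS hJ => union_subset_union hS hJ
  · intro T hT
    simp only [mem_powerset] at hT
    rw [← inter_union_distrib_left, inter_eq_left.2 hT]
  · simp only [mem_product, mem_powerset, and_imp, Prod.forall, Prod.mk.injEq]
    intro S J hS hJ
    rw [union_inter_distrib_right, union_inter_distrib_right, inter_eq_left.2 hS,
      inter_eq_left.2 hJ, disjoint_iff_inter_eq_empty.1 (h.mono_left hS),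
      disjoint_iff_inter_eq_empty.1 (h.symm.mono_left hJ)]
    simp
  · rw [← inter_union_distrib_left, inter_eq_left.2 (mem_powerset.1 hT)]

lemma tendsto_measure_of_eventually_mem {α : Type*} [MeasurableSpace α] {μ : Measure α}
    [IsProbabilityMeasure μ] {E : ℕ → Set α} (hE : ∀ n, MeasurableSet (E n)) {S : Set α}
    (hS : μ S = 1) (h : ∀ x ∈ S, ∀ᶠ n in atTop, x ∈ E n) :
    Tendsto (fun n => μ (E n)) atTop (𝓝 1) := by
  have hL : ∀ᵐ x ∂μ, x ∈ liminf E atTop := by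
    refine (mem_ae_iff_prob_eq_one (MeasurableSet.measurableSet_liminf hE)).2
      (le_antisymm prob_le_one ?_)
    exact hS ▸ measure_mono fun x hx => mem_liminf_iff_eventually_mem.2 (h x hx)
  rw [← measure_univ (μ := μ)]
  refine tendsto_measure_of_ae_tendsto_indicator_of_isFiniteMeasure atTop MeasurableSet.univ hE ?_
  filter_upwards [hL] with x hx
  simpa using mem_liminf_iff_eventually_mem.1 hx

lemma tendsto_measureReal_inter_of_tendsto_one {α ι : Type*} [MeasurableSpace α]
    {μ : Measure α} [IsProbabilityMeasure μ] {l : Filter ι} {G : ι → Set α}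
    (hG : ∀ n, MeasurableSet (G n)) (h : Tendsto (fun n => μ.real (G n)) l (𝓝 1)) (A : Set α) :
    Tendsto (fun n => μ.real (A ∩ G n)) l (𝓝 (μ.real A)) := by
  have hlow : Tendsto (fun n => μ.real A - (1 - μ.real (G n))) l (𝓝 (μ.real A)) := by
    simpa using (tendsto_const_nhds (x := μ.real A)).sub ((tendsto_const_nhds (x := 1)).sub h)
  refine tendsto_of_tendsto_of_tendsto_of_le_of_le hlow tendsto_const_nhds (fun n => ?_)
    fun n => measureReal_mono Set.inter_subset_left
  have : μ.real A ≤ μ.real (A ∩ G n) + μ.real (G n)ᶜ :=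
    (measureReal_mono fun x hx => by by_cases hx' : x ∈ G n <;> simp [hx, hx']).trans
      (measureReal_union_le _ _)
  rw [measureReal_compl (hG n), probReal_univ] at this
  linarith

section Configurations

variable {d : ℕ}

lemma eq_false_of_le_of_eq_false {η η' : Cfg d} (h : η ≤ η') {x : Site d} (hx : η' x = false) :
    η x = false := by
  simpa [hx] using Bool.le_iff_imp.1 (h x)

section Bootstrap

variable {c : Site d → Cfg d → ℝ} {Λ : Finset (Site d)} {η η' : Cfg d}

lemma bstepFin_apply_eq_true {x : Site d} :
    bstepFin d c Λ η x = true ↔ η x = true ∧ (x ∈ Λ → ¬ 0 < c x η) := by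
  unfold bstepFin
  split_ifs with hx <;> simp [hx]

lemma bstepFin_le (η : Cfg d) : bstepFin d c Λ η ≤ η := fun _ =>
  Bool.le_iff_imp.2 fun h => (bstepFin_apply_eq_true.1 h).1

lemma bstepFin_of_notMem {x : Site d} (hx : x ∉ Λ) (η : Cfg d) : bstepFin d c Λ η x = η x :=
  if_neg hx

lemma bstepFin_monotone (hmono : ConstraintMono d c) : Monotone (bstepFin d c Λ) :=
  fun η η' h x => by
    refine Bool.le_iff_imp.2 fun hx => bstepFin_apply_eq_true.2 ?_
    obtain ⟨hηx, hc⟩ := bstepFin_apply_eq_true.1 hx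
    exact ⟨Bool.le_iff_imp.1 (h x) hηx, fun hxΛ hc' => hc hxΛ (hc'.trans_le (hmono x η η' h))⟩

lemma card_infected_lt_of_bstepFin_ne (h : bstepFin d c Λ η ≠ η) :
    #{x ∈ Λ | η x = false} < #{x ∈ Λ | bstepFin d c Λ η x = false} := by
  refine card_lt_card ((ssubset_iff_of_subset ?_).2 ?_)
  · exact fun x hx => mem_filter.2 ⟨(mem_filter.1 hx).1,
      eq_false_of_le_of_eq_false (bstepFin_le η) (mem_filter.1 hx).2⟩
  obtain ⟨x, hx⟩ := Function.ne_iff.1 h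
  have hxΛ : x ∈ Λ := by_contra fun hxΛ => hx (bstepFin_of_notMem hxΛ η)
  have hle := Bool.le_iff_imp.1 (bstepFin_le (c := c) (Λ := Λ) η x)
  have hnew : bstepFin d c Λ η x = false ∧ η x = true := by
    cases hb : bstepFin d c Λ η x <;> cases hη : η x <;> simp_all
  exact ⟨x, mem_filter.2 ⟨hxΛ, hnew.1⟩, by simp [hnew.2]⟩

lemma isFixedPt_BPfin (η : Cfg d) : IsFixedPt (bstepFin d c Λ) (BPfin d c Λ η) :=
  isFixedPt_iterate_of_potential (fun η => #{x ∈ Λ | η x = false})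
    (fun _ => card_filter_le _ _) (fun _ => card_infected_lt_of_bstepFin_ne) _

lemma iterate_bstepFin_eq_BPfin {n : ℕ} (hn : #Λ ≤ n) (η : Cfg d) :
    (bstepFin d c Λ)^[n] (extCfg d Λ η) = BPfin d c Λ η := by
  obtain ⟨k, rfl⟩ := Nat.exists_eq_add_of_le hn
  rw [add_comm, iterate_add_apply]
  exact (isFixedPt_BPfin η).iterate k

lemma antitone_iterate_bstepFin (η : Cfg d) : Antitone fun n => (bstepFin d c Λ)^[n] η :=
  antitone_nat_of_succ_le fun n => by
    rw [iterate_succ_apply']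
    exact bstepFin_le _

lemma BPfin_le_iterate (η : Cfg d) (n : ℕ) :
    BPfin d c Λ η ≤ (bstepFin d c Λ)^[n] (extCfg d Λ η) := by
  rcases le_total n #Λ with h | h
  · exact antitone_iterate_bstepFin _ h
  · rw [iterate_bstepFin_eq_BPfin h]

lemma BPfin_le_extCfg (η : Cfg d) : BPfin d c Λ η ≤ extCfg d Λ η :=
  BPfin_le_iterate η 0

lemma extCfg_mono (h : η ≤ η') : extCfg d Λ η ≤ extCfg d Λ η' := fun x => by
  unfold extCfg
  split_ifs
  exacts [h x, le_rfl]

lemma BPfin_mono (hmono : ConstraintMono d c) (h : η ≤ η') : BPfin d c Λ η ≤ BPfin d c Λ η' :=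
  ((bstepFin_monotone hmono).iterate _) (extCfg_mono h)

lemma dependsOn_BPfin : DependsOn (BPfin d c Λ) Λ := fun η η' h => by
  have : extCfg d Λ η = extCfg d Λ η' :=
    funext fun x => by by_cases hx : x ∈ Λ <;> simp [extCfg, hx, h x]
  simp only [BPfin, this]

lemma BPfin_eq_of_le_of_BPfin_le (hmono : ConstraintMono d c) {σ σ' : Cfg d} (h₁ : σ' ≤ σ)
    (h₂ : BPfin d c Λ σ ≤ extCfg d Λ σ') : BPfin d c Λ σ' = BPfin d c Λ σ := by
  refine le_antisymm (BPfin_mono hmono h₁) ?_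
  calc BPfin d c Λ σ = (bstepFin d c Λ)^[#Λ] (BPfin d c Λ σ) :=
        ((isFixedPt_BPfin σ).iterate _).eq.symm
    _ ≤ BPfin d c Λ σ' := (bstepFin_monotone hmono).iterate _ h₂

end Bootstrap

section InfiniteVolume

variable {c : Site d → Cfg d → ℝ}

lemma bstep_le (η : Cfg d) : bstep d c η ≤ η := fun _ => Bool.and_le_left _ _

lemma antitone_iterate_bstep (η : Cfg d) : Antitone fun n => (bstep d c)^[n] η :=
  antitone_nat_of_succ_le fun n => by
    rw [iterate_succ_apply']
    exact bstep_le _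

lemma iterate_bstep_apply_eq {r : ℕ} (hrange : HasRange d c r) (η : Cfg d) (n : ℕ)
    {Λ : Finset (Site d)} {x : Site d} (hx : ∀ y : Site d, (∀ i, |y i - x i| ≤ n * r) → y ∈ Λ) :
    (bstep d c)^[n] η x = (bstepFin d c Λ)^[n] (extCfg d Λ η) x := by
  induction n generalizing x with
  | zero => simp [extCfg, hx x (by simp)]
  | succ n ih =>
    have hnbhd : ∀ y : Site d, (∀ i, |y i - x i| ≤ r) →
        (bstep d c)^[n] η y = (bstepFin d c Λ)^[n] (extCfg d Λ η) y := by
      refine fun y hy => ih fun z hz => hx z fun i => ?_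
      have := abs_sub_le (z i) (y i) (x i)
      have := hz i
      have := hy i
      push_cast
      linarith
    have hxΛ : x ∈ Λ := hx x (by simp)
    rw [iterate_succ_apply', iterate_succ_apply', bstep, bstepFin, if_pos hxΛ,
      hnbhd x (by simp), hrange x _ _ fun y _ hy => hnbhd y hy]

lemma exists_iterate_bstep_eq_false {η : Cfg d} (hη : BP d c η = fun _ => false)
    (x : Site d) : ∃ n, (bstep d c)^[n] η x = false := by
  simpa [BP] using congrFun hη x

lemma mem_box {N : ℕ} {x : Site d} : x ∈ box d N ↔ ∀ i, |x i| ≤ N := by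
  simp only [box, Fintype.mem_piFinset, Finset.mem_Icc, abs_le]

lemma box_mono : Monotone (box d) := fun _ _ h _ hx =>
  mem_box.2 fun i => (mem_box.1 hx i).trans (by exact_mod_cast h)

lemma eventually_subset_box (Λ : Finset (Site d)) : ∀ᶠ N in atTop, Λ ⊆ box d N := by
  refine eventually_atTop.2 ⟨Λ.sup fun x => univ.sup fun i => (x i).natAbs, fun N hN x hx => ?_⟩
  refine mem_box.2 fun i => ?_
  rw [Int.abs_eq_natAbs, Nat.cast_le]
  exact ((le_sup (f := fun i => (x i).natAbs) (mem_univ i)).trans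
    (le_sup (f := fun x => univ.sup fun i => (x i).natAbs) hx)).trans hN

lemma eventually_BPfin_box_eq_false {r : ℕ} (hrange : HasRange d c r) {η : Cfg d}
    (hη : BP d c η = fun _ => false) (N : ℕ) :
    ∀ᶠ M in atTop, ∀ x ∈ box d N, BPfin d c (box d M) η x = false := by
  choose n hn using exists_iterate_bstep_eq_false hη
  set n₀ := (box d N).sup n
  filter_upwards [eventually_ge_atTop (N + n₀ * r)] with M hM x hx
  have hnbhd : ∀ y : Site d, (∀ i, |y i - x i| ≤ n₀ * r) → y ∈ box d M := by
    refine fun y hy => mem_box.2 fun i => ?_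
    have := abs_sub_abs_le_abs_sub (y i) (x i)
    have := hy i
    have := mem_box.1 hx i
    have : ((N + n₀ * r : ℕ) : ℤ) ≤ M := by exact_mod_cast hM
    push_cast at this
    linarith
  refine eq_false_of_le_of_eq_false (BPfin_le_iterate η n₀) ?_
  rw [← iterate_bstep_apply_eq hrange η n₀ hnbhd]
  exact eq_false_of_le_of_eq_false (antitone_iterate_bstep η (le_sup hx)) (hn x)

end InfiniteVolume

section Cylinders

variable {Λ S : Finset (Site d)}

/-- `overwrite Λ T ⊤` is the configuration on `Λ` with healthy sites `T ∩ Λ`, extended by `1`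
outside `Λ`: sums over configurations on `Λ` are sums over `T ∈ Λ.powerset`. -/
def overwrite (S T : Finset (Site d)) (ζ : Cfg d) : Cfg d :=
  S.piecewise (fun y => decide (y ∈ T)) ζ

lemma overwrite_of_notMem {T : Finset (Site d)} {y : Site d} (hy : y ∉ S) (ζ : Cfg d) :
    overwrite S T ζ y = ζ y :=
  piecewise_eq_of_notMem _ _ _ hy

lemma overwrite_of_mem {T : Finset (Site d)} {y : Site d} (hy : y ∈ S) (ζ : Cfg d) :
    overwrite S T ζ y = decide (y ∈ T) :=
  piecewise_eq_of_mem _ _ _ hy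

lemma flipAt_apply_of_ne {x y : Site d} (h : y ≠ x) (η : Cfg d) : flipAt d η x y = η y :=
  update_of_ne h _ _

lemma overwrite_flipAt {S T : Finset (Site d)} {x : Site d} (hx : x ∉ S) (η : Cfg d) :
    overwrite S T (flipAt d η x) = flipAt d (overwrite S T η) x := by
  funext y
  by_cases hy : y ∈ S
  · have hyx : y ≠ x := ne_of_mem_of_not_mem hy hx
    rw [overwrite_of_mem hy, flipAt_apply_of_ne hyx, overwrite_of_mem hy]
  · rw [overwrite_of_notMem hy]
    by_cases hyx : y = x
    · subst hyx
      simp [flipAt, overwrite_of_notMem hy]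
    · rw [flipAt_apply_of_ne hyx, flipAt_apply_of_ne hyx, overwrite_of_notMem hy]

lemma measurableSet_cyl (Λ : Finset (Site d)) (ζ : Cfg d) : MeasurableSet (cyl d Λ ζ) := by
  have : cyl d Λ ζ = ⋂ x ∈ Λ, (fun η : Cfg d => η x) ⁻¹' {ζ x} := by
    ext η
    simp [cyl]
  rw [this]
  exact Λ.measurableSet_biInter fun x _ => measurable_pi_apply x (measurableSet_singleton _)

lemma cyl_congr {ζ ζ' : Cfg d} (h : ∀ x ∈ Λ, ζ x = ζ' x) : cyl d Λ ζ = cyl d Λ ζ' := by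
  ext η
  exact forall₂_congr fun x hx => by rw [h x hx]

lemma dependsOn_mem_cyl (ζ : Cfg d) : DependsOn (· ∈ cyl d Λ ζ) Λ := fun η η' h => by
  simp only [cyl, Set.mem_ofPred_eq]
  exact propext (forall₂_congr fun x hx => by rw [h x hx])

lemma mem_cyl_overwrite (η ζ : Cfg d) : η ∈ cyl d S (overwrite S {y ∈ S | η y = true} ζ) :=
  fun x hx => by cases h : η x <;> simp [overwrite, hx, h]

lemma cyl_eq_biUnion (hS : Disjoint Λ S) (ζ : Cfg d) :
    cyl d Λ ζ = ⋃ T ∈ S.powerset, cyl d (Λ ∪ S) (overwrite S T ζ) := by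
  ext η
  simp only [Set.mem_iUnion, mem_powerset, exists_prop]
  constructor
  · refine fun hη => ⟨{y ∈ S | η y = true}, filter_subset _ _, fun x hx => ?_⟩
    rcases mem_union.1 hx with hx | hx
    · rw [overwrite_of_notMem (disjoint_left.1 hS hx)]
      exact hη x hx
    · exact mem_cyl_overwrite η ζ x hx
  · rintro ⟨T, -, hT⟩ x hx
    rw [hT x (mem_union_left S hx), overwrite_of_notMem (disjoint_left.1 hS hx)]

lemma pairwiseDisjoint_cyl_overwrite {Λ' : Finset (Site d)} (hS : S ⊆ Λ') (ζ : Cfg d) :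
    (S.powerset : Set (Finset (Site d))).PairwiseDisjoint
      fun T => cyl d Λ' (overwrite S T ζ) := by
  intro T hT T' hT' hne
  obtain ⟨y, hy⟩ : ∃ y, ¬(y ∈ T ↔ y ∈ T') := by
    by_contra! h
    exact hne (Finset.ext h)
  have hyS : y ∈ S := by
    by_cases hyT : y ∈ T
    exacts [mem_powerset.1 hT hyT, mem_powerset.1 hT' (by tauto)]
  refine Set.disjoint_left.2 fun η hη hη' => hy ?_
  have := (hη y (hS hyS)).symm.trans (hη' y (hS hyS))
  simpa [overwrite, hyS] using this

lemma measureReal_cyl_eq_sum (ν : Measure (Cfg d)) [IsFiniteMeasure ν] (hS : Disjoint Λ S)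
    (ζ : Cfg d) :
    ν.real (cyl d Λ ζ) = ∑ T ∈ S.powerset, ν.real (cyl d (Λ ∪ S) (overwrite S T ζ)) := by
  rw [cyl_eq_biUnion hS ζ, measureReal_biUnion_finset
    (pairwiseDisjoint_cyl_overwrite subset_union_right ζ) fun T _ => measurableSet_cyl _ _]

lemma eq_biUnion_of_dependsOn {A : Set (Cfg d)} [DecidablePred (· ∈ A)]
    (hA : DependsOn (· ∈ A) Λ) :
    A = ⋃ T ∈ {T ∈ Λ.powerset | overwrite Λ T ⊤ ∈ A}, cyl d Λ (overwrite Λ T ⊤) := by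
  ext η
  simp only [Set.mem_iUnion, mem_filter, mem_powerset, exists_prop]
  constructor
  · intro hη
    refine ⟨{y ∈ Λ | η y = true}, ⟨filter_subset _ _, ?_⟩, mem_cyl_overwrite η ⊤⟩
    exact (hA (mem_cyl_overwrite η ⊤)).to_iff.1 hη
  · rintro ⟨T, ⟨-, hT⟩, hη⟩
    exact (hA hη).to_iff.2 hT

lemma DependsOn.measurableSet {A : Set (Cfg d)} (hA : DependsOn (· ∈ A) Λ) :
    MeasurableSet A := by
  rw [eq_biUnion_of_dependsOn hA]
  exact Finset.measurableSet_biUnion _ fun T _ => measurableSet_cyl _ _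

lemma measureReal_eq_sum_of_dependsOn (ν : Measure (Cfg d)) [IsFiniteMeasure ν]
    {A : Set (Cfg d)} [DecidablePred (· ∈ A)] (hA : DependsOn (· ∈ A) Λ) :
    ν.real A = ∑ T ∈ Λ.powerset with overwrite Λ T ⊤ ∈ A,
      ν.real (cyl d Λ (overwrite Λ T ⊤)) := by
  conv_lhs => rw [eq_biUnion_of_dependsOn hA]
  rw [measureReal_biUnion_finset
    ((pairwiseDisjoint_cyl_overwrite subset_rfl ⊤).subset (coe_subset.2 (filter_subset _ _)))
    fun T _ => measurableSet_cyl _ _]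

lemma cyl_overwrite_empty_overwrite_union {Λ' J : Finset (Site d)} (hΛΛ' : Λ ⊆ Λ')
    (hJ : J ⊆ Λ) (S : Finset (Site d)) :
    cyl d Λ' (overwrite Λ ∅ (overwrite Λ' (S ∪ J) ⊤)) =
      cyl d (Λ ∪ (Λ' \ Λ)) (overwrite (Λ' \ Λ) S ⊥) := by
  rw [union_sdiff_of_subset hΛΛ']
  refine cyl_congr fun y hy => ?_
  by_cases hyΛ : y ∈ Λ
  · rw [overwrite_of_mem hyΛ, overwrite_of_notMem fun h => (mem_sdiff.1 h).2 hyΛ]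
    simp
  · have : y ∉ J := fun h => hyΛ (hJ h)
    rw [overwrite_of_notMem hyΛ, overwrite_of_mem hy, overwrite_of_mem (mem_sdiff.2 ⟨hy, hyΛ⟩)]
    simp [this]

lemma cyl_eq_union_flipAt {x : Site d} (hx : x ∉ Λ) (ζ : Cfg d) :
    cyl d Λ ζ = cyl d (insert x Λ) ζ ∪ cyl d (insert x Λ) (flipAt d ζ x) := by
  have hflip : ∀ y ∈ Λ, flipAt d ζ x y = ζ y := fun y hy =>
    flipAt_apply_of_ne (by rintro rfl; exact hx hy) ζ
  ext η
  constructor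
  · intro hη
    by_cases hηx : η x = ζ x
    · exact Or.inl ((forall_mem_insert _ _ _).2 ⟨hηx, hη⟩)
    · refine Or.inr ((forall_mem_insert _ _ _).2
        ⟨?_, fun y hy => (hη y hy).trans (hflip y hy).symm⟩)
      simpa [flipAt] using Bool.eq_not.2 hηx
  · rintro (h | h) y hy
    · exact h y (mem_insert_of_mem hy)
    · exact (h y (mem_insert_of_mem hy)).trans (hflip y hy)

lemma disjoint_cyl_flipAt {x : Site d} (hx : x ∈ Λ) (ζ : Cfg d) :
    Disjoint (cyl d Λ ζ) (cyl d Λ (flipAt d ζ x)) :=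
  Set.disjoint_left.2 fun η h h' => by simpa [flipAt, h x hx] using h' x hx

/-- Each cylinder splits into the two cylinders over its base with one more site, so
equality propagates from the empty base. -/
lemma measure_cyl_eq_of_le {ν₁ ν₂ : Measure (Cfg d)} [IsProbabilityMeasure ν₁]
    [IsProbabilityMeasure ν₂] (h : ∀ Λ ζ, ν₁.real (cyl d Λ ζ) ≤ ν₂.real (cyl d Λ ζ))
    (Λ : Finset (Site d)) (ζ : Cfg d) : ν₁ (cyl d Λ ζ) = ν₂ (cyl d Λ ζ) := by
  suffices ∀ ζ, ν₁.real (cyl d Λ ζ) = ν₂.real (cyl d Λ ζ) from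
    (ENNReal.toReal_eq_toReal_iff' (measure_ne_top _ _) (measure_ne_top _ _)).1 (this ζ)
  induction Λ using Finset.induction_on with
  | empty => simp [cyl]
  | insert x Λ hx ih =>
    intro ζ
    have hsplit : ∀ ν : Measure (Cfg d), [IsFiniteMeasure ν] → ν.real (cyl d Λ ζ) =
        ν.real (cyl d (insert x Λ) ζ) + ν.real (cyl d (insert x Λ) (flipAt d ζ x)) :=
      fun ν _ => by
        rw [cyl_eq_union_flipAt hx, measureReal_union (disjoint_cyl_flipAt (mem_insert_self x Λ) ζ)
          (measurableSet_cyl _ _)]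
    have := ih ζ
    rw [hsplit, hsplit] at this
    linarith [h (insert x Λ) ζ, h (insert x Λ) (flipAt d ζ x)]

lemma cyl_inter_cyl {Λ Λ' : Finset (Site d)} {ζ ζ' η : Cfg d}
    (hη : η ∈ cyl d Λ ζ ∩ cyl d Λ' ζ') : cyl d Λ ζ ∩ cyl d Λ' ζ' = cyl d (Λ ∪ Λ') η := by
  rw [cyl_congr fun x hx => (hη.1 x hx).symm, cyl_congr fun x hx => (hη.2 x hx).symm]
  ext
  simp [cyl, or_imp, forall_and]

lemma Measure.ext_of_cyl {ν₁ ν₂ : Measure (Cfg d)} [IsFiniteMeasure ν₁]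
    (h : ∀ Λ ζ, ν₁ (cyl d Λ ζ) = ν₂ (cyl d Λ ζ)) : ν₁ = ν₂ := by
  have hgen : (MeasurableSpace.pi : MeasurableSpace (Cfg d)) =
      MeasurableSpace.generateFrom {s | ∃ Λ ζ, cyl d Λ ζ = s} := by
    refine le_antisymm (iSup_le fun x => Measurable.comap_le ?_)
      (MeasurableSpace.generateFrom_le ?_)
    · refine @measurable_to_countable' _ _ _ _ (MeasurableSpace.generateFrom _) _
        fun b => MeasurableSpace.measurableSet_generateFrom ⟨{x}, fun _ => b, ?_⟩
      ext
      simp [cyl]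
    · rintro _ ⟨Λ, ζ, rfl⟩
      exact measurableSet_cyl Λ ζ
  refine ext_of_generate_finite _ hgen ?_ (fun _ ⟨Λ, ζ, hs⟩ => hs ▸ h Λ ζ) ?_
  · rintro _ ⟨Λ, ζ, rfl⟩ _ ⟨Λ', ζ', rfl⟩ ⟨η, hη⟩
    exact ⟨Λ ∪ Λ', η, (cyl_inter_cyl hη).symm⟩
  · simpa [cyl] using h ∅ ⊤

end Cylinders

section Weights

variable {p : ℝ} {Λ S : Finset (Site d)} {ζ ζ' : Cfg d}

/-- The weight `π_Λ(ζ)` of detailed balance. -/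
def weight (p : ℝ) (Λ : Finset (Site d)) (ζ : Cfg d) : ℝ :=
  ∏ y ∈ Λ, if ζ y then p else 1 - p

lemma weight_pos (hp0 : 0 < p) (hp1 : p < 1) (Λ : Finset (Site d)) (ζ : Cfg d) :
    0 < weight p Λ ζ :=
  prod_pos fun y _ => by split <;> linarith

lemma weight_congr (h : ∀ y ∈ Λ, ζ y = ζ' y) : weight p Λ ζ = weight p Λ ζ' :=
  prod_congr rfl fun y hy => by rw [h y hy]

lemma weight_union (h : Disjoint Λ S) (ζ : Cfg d) :
    weight p (Λ ∪ S) ζ = weight p Λ ζ * weight p S ζ :=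
  prod_union h

lemma weight_union_overwrite (h : Disjoint Λ S) (T : Finset (Site d)) (ζ : Cfg d) :
    weight p (Λ ∪ S) (overwrite S T ζ) = weight p Λ ζ * weight p S (overwrite S T ⊤) := by
  rw [weight_union h]
  congr 1
  · exact weight_congr fun y hy => overwrite_of_notMem (disjoint_left.1 h hy) ζ
  · exact weight_congr fun y hy => by rw [overwrite_of_mem hy, overwrite_of_mem hy]

lemma IsProd.measureReal_cyl {π : Measure (Cfg d)} (hπ : IsProd d (fun _ => p) π)
    (hp0 : 0 ≤ p) (hp1 : p ≤ 1) (Λ : Finset (Site d)) (ζ : Cfg d) :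
    π.real (cyl d Λ ζ) = weight p Λ ζ := by
  rw [measureReal_def, hπ.2, ENNReal.toReal_prod]
  exact prod_congr rfl fun y _ => ENNReal.toReal_ofReal (by split <;> linarith)

lemma weight_overwrite_union {Λ' : Finset (Site d)} (hΛΛ' : Λ ⊆ Λ')
    (hS : S ⊆ Λ' \ Λ) (J : Finset (Site d)) :
    weight p Λ (overwrite Λ' (S ∪ J) ⊤) = weight p Λ (overwrite Λ J ⊤) :=
  weight_congr fun y hy => by
    have : y ∉ S := fun h => (mem_sdiff.1 (hS h)).2 hy
    simp [overwrite, hy, hΛΛ' hy, this]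

end Weights

section DetailedBalance

variable {c : Site d → Cfg d → ℝ} {p : ℝ} {r : ℕ} {μ : Measure (Cfg d)} {Λ : Finset (Site d)}
  {η η' : Cfg d}

/-- `μ(η|_Λ) / π_Λ(η) = μ(η'|_Λ) / π_Λ(η')`, cross-multiplied. -/
def SameDensity (μ : Measure (Cfg d)) (p : ℝ) (Λ : Finset (Site d)) (η η' : Cfg d) : Prop :=
  μ.real (cyl d Λ η) * weight p Λ η' = μ.real (cyl d Λ η') * weight p Λ η

lemma SameDensity.trans {η'' : Cfg d} (hp0 : 0 < p) (hp1 : p < 1) (h : SameDensity μ p Λ η η')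
    (h' : SameDensity μ p Λ η' η'') : SameDensity μ p Λ η η'' := by
  unfold SameDensity at *
  refine mul_right_cancel₀ (weight_pos hp0 hp1 Λ η').ne' ?_
  linear_combination weight p Λ η'' * h + weight p Λ η * h'

lemma sameDensity_congr {ζ ζ' : Cfg d} (hη : ∀ x ∈ Λ, η x = ζ x) (hη' : ∀ x ∈ Λ, η' x = ζ' x) :
    SameDensity μ p Λ η η' ↔ SameDensity μ p Λ ζ ζ' := by
  rw [SameDensity, SameDensity, cyl_congr hη, cyl_congr hη', weight_congr hη, weight_congr hη']

noncomputable def nbhd (r : ℕ) (x : Site d) : Finset (Site d) :=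
  Fintype.piFinset fun i => Icc (x i - r) (x i + r)

lemma mem_nbhd {x y : Site d} : y ∈ nbhd r x ↔ ∀ i, |y i - x i| ≤ r := by
  simp only [nbhd, Fintype.mem_piFinset, mem_Icc, abs_le]
  exact forall_congr' fun i => by constructor <;> intro h <;> constructor <;> linarith [h.1, h.2]

/-- Detailed balance is only available on volumes containing the range of `c x`, so one enlarges
`Λ` by a set `S` and sums over the configurations on `S`: by monotonicity, each of them still
makes the flip at `x` legal. -/
lemma DetailedBalance.sameDensity_flipAt (hp0 : 0 < p) (hp1 : p < 1)
    (hmono : ConstraintMono d c) [IsFiniteMeasure μ] (hdb : DetailedBalance d c p r μ)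
    (hη : ∀ y ∉ Λ, η y = true) {x : Site d} (hx : x ∈ Λ) (hcx : 0 < c x η) :
    SameDensity μ p Λ η (flipAt d η x) := by
  set S := nbhd r x \ Λ
  have hS : Disjoint Λ S := disjoint_sdiff
  have hxS : x ∉ S := fun h => (mem_sdiff.1 h).2 hx
  rw [SameDensity, measureReal_cyl_eq_sum μ hS η, measureReal_cyl_eq_sum μ hS, sum_mul,
    sum_mul]
  refine sum_congr rfl fun T _ => ?_
  have hle : overwrite S T η ≤ η := fun y => by
    by_cases hy : y ∈ S
    · simp [hη y (mem_sdiff.1 hy).2]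
    · rw [overwrite_of_notMem hy]
  have hc : 0 < c x (overwrite S T η) := hcx.trans_le (hmono x _ _ hle)
  have hball : ∀ y : Site d, (∀ i, |y i - x i| ≤ r) → y ∈ Λ ∪ S := fun y hy => by
    rw [union_sdiff_self_eq_union]
    exact mem_union_right _ (mem_nbhd.2 hy)
  have hdbT := hdb (Λ ∪ S) x hball (overwrite S T η)
  change c x _ * weight p _ _ * μ.real _ = c x _ * weight p _ _ * μ.real _ at hdbT
  rw [← overwrite_flipAt hxS, weight_union_overwrite hS, weight_union_overwrite hS] at hdbT
  refine mul_left_cancel₀ (mul_pos hc (weight_pos hp0 hp1 S (overwrite S T ⊤))).ne' ?_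
  linear_combination hdbT

lemma reflTransGen_legalStep_apply_of_notMem
    (h : Relation.ReflTransGen (LegalStep d c Λ) η η') {y : Site d} (hy : y ∉ Λ) :
    η' y = η y := by
  induction h with
  | refl => rfl
  | tail _ hstep ih =>
    obtain ⟨x, hx, -, rfl⟩ := hstep
    rw [flipAt_apply_of_ne (by rintro rfl; exact hy hx), ih]

lemma DetailedBalance.sameDensity_of_reflTransGen (hp0 : 0 < p) (hp1 : p < 1)
    (hmono : ConstraintMono d c) [IsFiniteMeasure μ] (hdb : DetailedBalance d c p r μ)
    (hη : ∀ y ∉ Λ, η y = true) (h : Relation.ReflTransGen (LegalStep d c Λ) η η') :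
    SameDensity μ p Λ η η' := by
  induction h with
  | refl => rfl
  | tail hchain hstep ih =>
    obtain ⟨x, hx, hcx, rfl⟩ := hstep
    refine ih.trans hp0 hp1 (hdb.sameDensity_flipAt hp0 hp1 hmono (fun y hy => ?_) hx hcx)
    rw [reflTransGen_legalStep_apply_of_notMem hchain hy, hη y hy]

lemma DetailedBalance.sameDensity_of_BPfin_eq (hp0 : 0 < p) (hp1 : p < 1)
    (hmono : ConstraintMono d c) (hirr : IrreducibleKCM d c) [IsFiniteMeasure μ]
    (hdb : DetailedBalance d c p r μ) (h : BPfin d c Λ η = BPfin d c Λ η') :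
    SameDensity μ p Λ η η' := by
  have hext : ∀ ζ : Cfg d, ∀ x ∈ Λ, extCfg d Λ ζ x = ζ x := fun ζ x hx => if_pos hx
  refine (sameDensity_congr (hext η) (hext η')).1 ?_
  exact hdb.sameDensity_of_reflTransGen hp0 hp1 hmono (fun y hy => if_neg hy) (hirr Λ η η' h)

end DetailedBalance

section KeyBound

variable {c : Site d → Cfg d → ℝ} {p : ℝ} {r : ℕ} {μ π : Measure (Cfg d)}
  {Λ Λ' : Finset (Site d)}

def infectedBy (c : Site d → Cfg d → ℝ) (Λ Λ' : Finset (Site d)) : Set (Cfg d) :=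
  {η | ∀ x ∈ Λ, BPfin d c Λ' η x = false}

lemma dependsOn_mem_infectedBy : DependsOn (· ∈ infectedBy c Λ Λ') Λ' := fun η η' h => by
  simp only [infectedBy, Set.mem_ofPred_eq, dependsOn_BPfin h]

/-- Infecting `Λ` beforehand does not change the bootstrap limit in `Λ'`, so both configurations
have the same density. -/
lemma DetailedBalance.pivot (hp0 : 0 < p) (hp1 : p < 1) (hmono : ConstraintMono d c)
    (hirr : IrreducibleKCM d c) [IsFiniteMeasure μ] (hdb : DetailedBalance d c p r μ)
    (hΛΛ' : Λ ⊆ Λ') {σ : Cfg d} (hσ : σ ∈ infectedBy c Λ Λ') :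
    μ.real (cyl d Λ' σ) * weight p Λ ⊥ =
      μ.real (cyl d Λ' (overwrite Λ ∅ σ)) * weight p Λ σ := by
  have hle : overwrite Λ ∅ σ ≤ σ := fun y => by
    by_cases hy : y ∈ Λ
    · simp [overwrite_of_mem hy]
    · rw [overwrite_of_notMem hy]
  have hBP : BPfin d c Λ' σ ≤ extCfg d Λ' (overwrite Λ ∅ σ) := fun y => by
    by_cases hyN : y ∈ Λ
    · simp [hσ y hyN]
    by_cases hyM : y ∈ Λ'
    · simpa [extCfg, hyM, overwrite_of_notMem hyN] using BPfin_le_extCfg (c := c) (Λ := Λ') σ y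
    · simp [extCfg, hyM]
  have hsd := hdb.sameDensity_of_BPfin_eq hp0 hp1 hmono hirr
    (BPfin_eq_of_le_of_BPfin_le hmono hle hBP).symm
  have hsplit : ∀ ζ, weight p Λ' ζ = weight p Λ ζ * weight p (Λ' \ Λ) ζ := fun ζ => by
    rw [← weight_union disjoint_sdiff, union_sdiff_of_subset hΛΛ']
  rw [SameDensity, hsplit, hsplit σ,
    weight_congr (ζ' := ⊥) fun y hy => by simp [overwrite_of_mem hy],
    weight_congr (Λ := Λ' \ Λ) (ζ' := σ) fun y hy => overwrite_of_notMem (mem_sdiff.1 hy).2 σ]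
    at hsd
  refine mul_right_cancel₀ (weight_pos hp0 hp1 (Λ' \ Λ) σ).ne' ?_
  linear_combination hsd

lemma IsProd.sum_weight_overwrite (hπ : IsProd d (fun _ => p) π) (hp0 : 0 ≤ p) (hp1 : p ≤ 1)
    (Λ : Finset (Site d)) : ∑ J ∈ Λ.powerset, weight p Λ (overwrite Λ J ⊤) = 1 := by
  have := hπ.1
  have := measureReal_eq_sum_of_dependsOn π (A := Set.univ) (Λ := Λ) fun _ _ _ => rfl
  simpa [hπ.measureReal_cyl hp0 hp1] using this.symm

lemma DetailedBalance.measureReal_infectedBy_mul_weight_le (hp0 : 0 < p) (hp1 : p < 1)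
    (hmono : ConstraintMono d c) (hirr : IrreducibleKCM d c) [IsFiniteMeasure μ]
    (hdb : DetailedBalance d c p r μ) (hπ : IsProd d (fun _ => p) π) (hΛΛ' : Λ ⊆ Λ') :
    μ.real (infectedBy c Λ Λ') * weight p Λ ⊥ ≤ μ.real (cyl d Λ ⊥) := by
  set O := Λ' \ Λ
  have hunion : O ∪ Λ = Λ' := sdiff_union_of_subset hΛΛ'
  calc μ.real (infectedBy c Λ Λ') * weight p Λ ⊥
      = ∑ T ∈ Λ'.powerset with overwrite Λ' T ⊤ ∈ infectedBy c Λ Λ',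
          μ.real (cyl d Λ' (overwrite Λ ∅ (overwrite Λ' T ⊤))) *
            weight p Λ (overwrite Λ' T ⊤) := by
        rw [measureReal_eq_sum_of_dependsOn μ dependsOn_mem_infectedBy, sum_mul]
        exact sum_congr rfl fun T hT => hdb.pivot hp0 hp1 hmono hirr hΛΛ' (mem_filter.1 hT).2
    _ ≤ ∑ T ∈ (O ∪ Λ).powerset, μ.real (cyl d Λ' (overwrite Λ ∅ (overwrite Λ' T ⊤))) *
            weight p Λ (overwrite Λ' T ⊤) := by
        rw [hunion]
        exact sum_le_sum_of_subset_of_nonneg (filter_subset _ _) fun T _ _ =>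
          mul_nonneg measureReal_nonneg (weight_pos hp0 hp1 _ _).le
    _ = ∑ S ∈ O.powerset, μ.real (cyl d (Λ ∪ O) (overwrite O S ⊥)) *
          ∑ J ∈ Λ.powerset, weight p Λ (overwrite Λ J ⊤) := by
        rw [sum_powerset_union disjoint_sdiff_self_left]
        refine sum_congr rfl fun S hS => ?_
        rw [mul_sum]
        refine sum_congr rfl fun J hJ => ?_
        rw [cyl_overwrite_empty_overwrite_union hΛΛ' (mem_powerset.1 hJ),
          weight_overwrite_union hΛΛ' (mem_powerset.1 hS)]
    _ = μ.real (cyl d Λ ⊥) := by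
        simp_rw [hπ.sum_weight_overwrite hp0.le hp1.le, mul_one]
        exact (measureReal_cyl_eq_sum μ disjoint_sdiff ⊥).symm

lemma DetailedBalance.measureReal_inter_infectedBy_mul_weight (hp0 : 0 < p) (hp1 : p < 1)
    (hmono : ConstraintMono d c) (hirr : IrreducibleKCM d c) [IsFiniteMeasure μ]
    (hdb : DetailedBalance d c p r μ) (hπ : IsProd d (fun _ => p) π) {A : Set (Cfg d)}
    (hA : DependsOn (· ∈ A) Λ) :
    μ.real (A ∩ infectedBy c Λ Λ) * weight p Λ ⊥ =
      μ.real (cyl d Λ ⊥) * π.real (A ∩ infectedBy c Λ Λ) := by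
  have := hπ.1
  have hAG : DependsOn (· ∈ A ∩ infectedBy c Λ Λ) Λ := fun η η' h =>
    propext (and_congr (hA h).to_iff (dependsOn_mem_infectedBy h).to_iff)
  rw [measureReal_eq_sum_of_dependsOn μ hAG, measureReal_eq_sum_of_dependsOn π hAG, sum_mul,
    mul_sum]
  refine sum_congr rfl fun T hT => ?_
  rw [hdb.pivot hp0 hp1 hmono hirr subset_rfl (mem_filter.1 hT).2.2,
    hπ.measureReal_cyl hp0.le hp1.le, cyl_congr (ζ' := ⊥) fun y hy => by simp [overwrite_of_mem hy]]

lemma DetailedBalance.measureReal_infectedBy_mul_le (hp0 : 0 < p) (hp1 : p < 1)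
    (hmono : ConstraintMono d c) (hirr : IrreducibleKCM d c) [IsFiniteMeasure μ]
    (hdb : DetailedBalance d c p r μ) (hπ : IsProd d (fun _ => p) π) (hΛΛ' : Λ ⊆ Λ')
    {A : Set (Cfg d)} (hA : DependsOn (· ∈ A) Λ) :
    μ.real (infectedBy c Λ Λ') * π.real (A ∩ infectedBy c Λ Λ) ≤
      μ.real (A ∩ infectedBy c Λ Λ) := by
  refine le_of_mul_le_mul_right ?_ (weight_pos hp0 hp1 Λ ⊥)
  calc μ.real (infectedBy c Λ Λ') * π.real (A ∩ infectedBy c Λ Λ) * weight p Λ ⊥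
      = μ.real (infectedBy c Λ Λ') * weight p Λ ⊥ * π.real (A ∩ infectedBy c Λ Λ) := by
        ring
    _ ≤ μ.real (cyl d Λ ⊥) * π.real (A ∩ infectedBy c Λ Λ) :=
        mul_le_mul_of_nonneg_right
          (hdb.measureReal_infectedBy_mul_weight_le hp0 hp1 hmono hirr hπ hΛΛ') measureReal_nonneg
    _ = μ.real (A ∩ infectedBy c Λ Λ) * weight p Λ ⊥ :=
        (hdb.measureReal_inter_infectedBy_mul_weight hp0 hp1 hmono hirr hπ hA).symm

lemma DetailedBalance.measureReal_cyl_le (hp0 : 0 < p) (hp1 : p < 1) (hrange : HasRange d c r)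
    (hmono : ConstraintMono d c) (hirr : IrreducibleKCM d c) (hπ : IsProd d (fun _ => p) π)
    (hπlim : Tendsto (fun N => π (infectedBy c (box d N) (box d N))) atTop (𝓝 1))
    [IsProbabilityMeasure μ] (hdb : DetailedBalance d c p r μ)
    (h0 : μ {η | BP d c η = fun _ => false} = 1) (Λ : Finset (Site d)) (a : Cfg d) :
    π.real (cyl d Λ a) ≤ μ.real (cyl d Λ a) := by
  have := hπ.1
  have hE : ∀ N, Tendsto (fun M => μ.real (infectedBy c (box d N) (box d M))) atTop (𝓝 1) :=
    fun N => by
      simpa [comp_def, measureReal_def] using (ENNReal.tendsto_toReal ENNReal.one_ne_top).comp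
        (tendsto_measure_of_eventually_mem (fun M => dependsOn_mem_infectedBy.measurableSet) h0
          fun η hη => eventually_BPfin_box_eq_false hrange hη N)
  have hbound : ∀ᶠ N in atTop,
      π.real (cyl d Λ a ∩ infectedBy c (box d N) (box d N)) ≤ μ.real (cyl d Λ a) := by
    filter_upwards [eventually_subset_box Λ] with N hN
    have hA := (dependsOn_mem_cyl (Λ := Λ) a).mono (coe_subset.2 hN)
    refine le_of_tendsto ((hE N).mul_const _) ?_ |>.trans_eq' (one_mul _)
    filter_upwards [eventually_ge_atTop N] with M hM
    exact (hdb.measureReal_infectedBy_mul_le hp0 hp1 hmono hirr hπ (box_mono hM) hA).trans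
      (measureReal_mono Set.inter_subset_left)
  refine le_of_tendsto (tendsto_measureReal_inter_of_tendsto_one
    (fun N => dependsOn_mem_infectedBy.measurableSet) ?_ _) hbound
  simpa [comp_def, measureReal_def] using (ENNReal.tendsto_toReal ENNReal.one_ne_top).comp hπlim

end KeyBound

end Configurations

theorem stmt7_general (d : ℕ) (q p : ℝ) (hq0 : 0 < q) (hq1 : q < 1) (hp : p = 1 - q)
    (r : ℕ) (c : Site d → Cfg d → ℝ) (hrange : HasRange d c r)
    (hmono : ConstraintMono d c) (hirr : IrreducibleKCM d c)
    (π : Measure (Cfg d)) (hπ : IsProd d (fun _ => p) π)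
    (hπlim : Filter.Tendsto
      (fun N : ℕ => π {η | ∀ x ∈ box d N, BPfin d c (box d N) η x = false})
      Filter.atTop (nhds 1))
    (μ : Measure (Cfg d)) (hμ : IsProbabilityMeasure μ)
    (hdb : DetailedBalance d c p r μ)
    (h0 : μ {η | BP d c η = fun _ => false} = 1) :
    μ = π := by
  have hp0 : 0 < p := by linarith
  have hp1 : p < 1 := by linarith
  have := hπ.1
  refine (Measure.ext_of_cyl (measure_cyl_eq_of_le fun Λ a => ?_)).symm
  exact hdb.measureReal_cyl_le hp0 hp1 hrange hmono hirr hπ hπlim h0 Λ a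

/-- let `(c_x)` be a monotone KCM constraint family of range `r` on `ℤ^d`
satisfying the irreducibility assumption, and suppose
`π(BP^{Λ_N}(η|_{Λ_N}) = 0_{Λ_N}) → 1` as `N → ∞`, where `π` is the Bernoulli(`p`)
product measure. If `μ` is a probability measure satisfying detailed balance with
`BP(η) = 0` `μ`-almost surely, then `μ = π`. -/
theorem stmt7 (d : ℕ) (q p : ℝ) (hq0 : 0 < q) (hq1 : q < 1) (hp : p = 1 - q)
    (r : ℕ) (c : Site d → Cfg d → ℝ) (hrange : HasRange d c r)
    (hc0 : ∀ x η, 0 ≤ c x η) (hmono : ConstraintMono d c) (hirr : IrreducibleKCM d c)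
    (π : Measure (Cfg d)) (hπ : IsProd d (fun _ => p) π)
    (hπlim : Filter.Tendsto
      (fun N : ℕ => π {η | ∀ x ∈ box d N, BPfin d c (box d N) η x = false})
      Filter.atTop (nhds 1))
    (μ : Measure (Cfg d)) (hμ : IsProbabilityMeasure μ)
    (hdb : DetailedBalance d c p r μ)
    (h0 : μ {η | BP d c η = fun _ => false} = 1) :
    μ = π :=
  stmt7_general d q p hq0 hq1 hp r c hrange hmono hirr π hπ hπlim μ hμ hdb h0
end

section
/- There exists a constant c_q, depending only on q ∈ (0,1), such that for all integers ℓ, N ≥ 1 and every function f on Ω̂: Ent_{π̂}(f²) ≤ c_q·ℓ·Σ_{i=1}^N π̂( Var_{π̂_{Λ_i}}(f) ), where Var_{π̂_{Λ_i}}(f) denotes the conditional variance of f with respect to the coordinates in the block Λ_i (distributed according to π̂_{Λ_i}), the coordinates outside Λ_i being fixed. -/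
open scoped Classical BigOperators

/-- The volume `Λ = {1, …, N(ℓ+1)}`, union of the `N` blocks `Λ_i`. -/
noncomputable def Lam (ℓ N : ℕ) : Finset ℤ := Finset.Icc 1 ((N : ℤ) * ((ℓ : ℤ) + 1))

/-- Configurations on `Λ`. -/
abbrev S (ℓ N : ℕ) : Type := ↥(Lam ℓ N) → Bool

/-- The state of site `x` for the configuration `η`, with infected (`0`) boundary
conditions at `0` and at `N(ℓ+1)+1` (all other external sites are irrelevant). -/
noncomputable def getS (ℓ N : ℕ) (η : S ℓ N) (x : ℤ) : Bool :=
  if h : x ∈ Lam ℓ N then η ⟨x, h⟩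
  else decide (x ≠ 0 ∧ x ≠ (N : ℤ) * ((ℓ : ℤ) + 1) + 1)

/-- The block `Λ_i = {i(ℓ+1) - ℓ, …, i(ℓ+1)}` of `ℓ+1` consecutive sites. -/
noncomputable def blockI (ℓ : ℕ) (i : ℤ) : Finset ℤ :=
  Finset.Icc (i * ((ℓ : ℤ) + 1) - (ℓ : ℤ)) (i * ((ℓ : ℤ) + 1))

/-- `η ∈ Ω̂`: every block `Λ_i`, `1 ≤ i ≤ N`, contains at least one infected site. -/
def goodCfg (ℓ N : ℕ) (η : S ℓ N) : Prop :=
  ∀ i ∈ Finset.Icc (1 : ℤ) (N : ℤ), ∃ x ∈ blockI ℓ i, getS ℓ N η x = false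

/-- `Ω̂` as a finite set of configurations. -/
noncomputable def GoodSet (ℓ N : ℕ) : Finset (S ℓ N) :=
  Finset.univ.filter (goodCfg ℓ N)

/-- The Bernoulli(`p`) weight of a configuration, with `p = 1 - q`. -/
noncomputable def wS (q : ℝ) (ℓ N : ℕ) (η : S ℓ N) : ℝ :=
  ∏ y : ↥(Lam ℓ N), if η y then 1 - q else q

/-- The probability of `η` under `π̂ = ⊗_i π̂_{Λ_i}` (the Bernoulli(`p`) product measure
conditioned on every block containing an infection). -/
noncomputable def phat (q : ℝ) (ℓ N : ℕ) (η : S ℓ N) : ℝ :=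
  if goodCfg ℓ N η then wS q ℓ N η / (∑ ξ ∈ GoodSet ℓ N, wS q ℓ N ξ) else 0

/-- The mean of `g` under `π̂`. -/
noncomputable def avg (q : ℝ) (ℓ N : ℕ) (g : S ℓ N → ℝ) : ℝ :=
  ∑ η ∈ GoodSet ℓ N, phat q ℓ N η * g η

/-- The entropy `Ent_{π̂}(g) = π̂(g log g) - π̂(g) log π̂(g)`. -/
noncomputable def entS (q : ℝ) (ℓ N : ℕ) (g : S ℓ N → ℝ) : ℝ :=
  (∑ η ∈ GoodSet ℓ N, phat q ℓ N η * (g η * Real.log (g η))) -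
    avg q ℓ N g * Real.log (avg q ℓ N g)

/-- The configuration `η` flipped at site `x`. -/
def flipS (ℓ N : ℕ) (η : S ℓ N) (x : ℤ) : S ℓ N := fun y =>
  if (y : ℤ) = x then !(η y) else η y

/-- The configuration agreeing with `ζ` on the block `Λ_i` and with `η` elsewhere. -/
noncomputable def patch (ℓ N : ℕ) (i : ℤ) (η ζ : S ℓ N) : S ℓ N := fun y =>
  if (y : ℤ) ∈ blockI ℓ i then ζ y else η y

/-- The (unnormalized) weight of the block configuration `ζ|_{Λ_i}` under `π̂_{Λ_i}`,
the Bernoulli(`p`) measure on the block conditioned on containing an infection. -/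
noncomputable def blockW (q : ℝ) (ℓ N : ℕ) (i : ℤ) (ζ : S ℓ N) : ℝ :=
  (if ∃ x ∈ blockI ℓ i, getS ℓ N ζ x = false then (1 : ℝ) else 0) *
    ∏ y ∈ Finset.univ.filter (fun y : ↥(Lam ℓ N) => (y : ℤ) ∈ blockI ℓ i),
      (if ζ y then 1 - q else q)

/-- The conditional expectation `π̂_{Λ_i}(f)(η)`: average of `f` over the coordinates of
the block `Λ_i` (distributed according to `π̂_{Λ_i}`), the other coordinates fixed by `η`. -/
noncomputable def condE (q : ℝ) (ℓ N : ℕ) (i : ℤ) (f : S ℓ N → ℝ) (η : S ℓ N) : ℝ :=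
  (∑ ζ : S ℓ N, blockW q ℓ N i ζ * f (patch ℓ N i η ζ)) /
    (∑ ζ : S ℓ N, blockW q ℓ N i ζ)

/-- The conditional variance `Var_{π̂_{Λ_i}}(f)(η)` over the block `Λ_i`. -/
noncomputable def condVar (q : ℝ) (ℓ N : ℕ) (i : ℤ) (f : S ℓ N → ℝ) (η : S ℓ N) : ℝ :=
  condE q ℓ N i (fun ξ => f ξ ^ 2) η - (condE q ℓ N i f η) ^ 2

/-!
Integrating out the blocks `Λ_1, …, Λ_N` one after the other writes `Ent_π̂(g)` as a telescoping
sum of averaged one-block entropies of partially integrated functions; since the entropy is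
jointly convex and `π̂` is invariant under resampling a single block from `π̂_{Λ_i}`, this
tensorizes: `Ent_π̂(g) ≤ ∑_i π̂(Ent_{π̂_{Λ_i}}(g))`. Under `π̂_{Λ_i}` every admissible block
configuration has probability at least `min(q, p)^(ℓ+1)`, so `f²` is at most
`T = min(q, p)^-(ℓ+1)` times its mean, and an elementary comparison of `u log(u/v) - u + v`
with `(√u - √v)²` gives `Ent(f²) ≤ (18 + 8 log T) Var(f)`, with `log T` linear in `ℓ`.
-/

open Real Finset

lemma sub_le_mul_log_sub_mul_log {x y : ℝ} (hx : 0 ≤ x) (hy : 0 < y) :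
    x - y ≤ x * log x - x * log y := by
  rcases hx.eq_or_lt with rfl | hx
  · simp [hy.le]
  have h := self_sub_one_le_mul_log (div_nonneg hx.le hy.le)
  rw [log_div hx.ne' hy.ne', div_sub_one hy.ne', div_mul_eq_mul_div,
    div_le_div_iff_of_pos_right hy] at h
  linarith

lemma log_sum_le {κ : Type*} [Fintype κ] {w A B : κ → ℝ} (hw : ∀ z, 0 ≤ w z)
    (hA : ∀ z, 0 ≤ A z) (hB : ∀ z, 0 ≤ B z) (hAB : ∀ z, B z = 0 → A z = 0) :
    (∑ z, w z * A z) * log (∑ z, w z * A z) - (∑ z, w z * A z) * log (∑ z, w z * B z) ≤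
      ∑ z, w z * (A z * log (A z) - A z * log (B z)) := by
  have hwA : ∀ z, 0 ≤ w z * A z := fun z => mul_nonneg (hw z) (hA z)
  rcases (sum_nonneg fun z _ => hwA z).eq_or_lt with hSA | hSA
  · have hzero : ∀ z, w z * A z = 0 := fun z =>
      (sum_eq_zero_iff_of_nonneg fun z _ => hwA z).1 hSA.symm z (mem_univ z)
    rw [← hSA, zero_mul, zero_mul, sub_zero]
    refine (sum_eq_zero fun z _ => ?_).ge
    rw [← mul_sub, ← mul_assoc, hzero, zero_mul]
  set SA := ∑ z, w z * A z
  set SB := ∑ z, w z * B z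
  have hSB : 0 < SB := by
    refine (sum_nonneg fun z _ => mul_nonneg (hw z) (hB z)).lt_of_ne fun h => hSA.ne' ?_
    refine sum_eq_zero fun z _ => ?_
    rcases mul_eq_zero.1 ((sum_eq_zero_iff_of_nonneg fun z _ =>
      mul_nonneg (hw z) (hB z)).1 h.symm z (mem_univ z)) with h | h
    · rw [h, zero_mul]
    · rw [hAB z h, mul_zero]
  have hc : 0 < SA / SB := div_pos hSA hSB
  -- termwise `A log A - A log B ≥ A log c + A - c B`, here with `c = SA / SB`
  have hterm : ∀ z, w z * (A z * log (SA / SB) + A z - SA / SB * B z) ≤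
      w z * (A z * log (A z) - A z * log (B z)) := by
    intro z
    refine mul_le_mul_of_nonneg_left ?_ (hw z)
    rcases (hB z).eq_or_lt with hz | hz
    · simp [← hz, hAB z hz.symm]
    have := sub_le_mul_log_sub_mul_log (hA z) (mul_pos hc hz)
    rw [log_mul hc.ne' hz.ne'] at this
    linarith
  calc SA * log SA - SA * log SB
      = ∑ z, w z * (A z * log (SA / SB) + A z - SA / SB * B z) := by
        have e1 : ∑ z, w z * (A z * log (SA / SB)) = SA * log (SA / SB) := by
          rw [sum_mul]; exact sum_congr rfl fun z _ => by ring
        have e2 : ∑ z, w z * (SA / SB * B z) = SA / SB * SB := by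
          rw [mul_sum]; exact sum_congr rfl fun z _ => by ring
        simp only [mul_sub, mul_add, sum_sub_distrib, sum_add_distrib]
        rw [e1, e2, log_div hSA.ne' hSB.ne', div_mul_cancel₀ _ hSB.ne']
        ring
    _ ≤ _ := sum_le_sum fun z _ => hterm z

lemma mul_log_sub_le_sq_sub {a b T : ℝ} (ha : 0 ≤ a) (hb : 0 ≤ b) (hT : 1 ≤ T)
    (hab : a ^ 2 ≤ T * b ^ 2) :
    a ^ 2 * log (a ^ 2) - a ^ 2 * log (b ^ 2) - a ^ 2 + b ^ 2 ≤
      (9 + 4 * log T) * (a - b) ^ 2 := by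
  have hlogT : 0 ≤ log T := log_nonneg hT
  rcases hb.eq_or_lt with rfl | hb
  · have : a = 0 := by nlinarith
    simp [this]
  rcases ha.eq_or_lt with rfl | ha
  · norm_num
    nlinarith [sq_nonneg b]
  have hlog : log (a ^ 2) - log (b ^ 2) = log (a ^ 2 / b ^ 2) :=
    (log_div (by positivity) (by positivity)).symm
  by_cases hsmall : a ≤ 2 * b
  · -- `log x ≤ x - 1` turns the left side into `(a² - b²)² / b² = (a - b)² (a + b)² / b²`
    have h1 : log (a ^ 2 / b ^ 2) ≤ a ^ 2 / b ^ 2 - 1 := log_le_sub_one_of_pos (by positivity)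
    have h2 : a ^ 2 * (a ^ 2 / b ^ 2 - 1) - a ^ 2 + b ^ 2 = (a - b) ^ 2 * ((a + b) / b) ^ 2 := by
      field_simp; ring
    have h3 : ((a + b) / b) ^ 2 ≤ 9 := by
      rw [div_pow, div_le_iff₀ (by positivity)]; nlinarith
    nlinarith [mul_le_mul_of_nonneg_left h1 (sq_nonneg a),
      mul_le_mul_of_nonneg_left h3 (sq_nonneg (a - b))]
  · -- `a² ≤ T b²` bounds the logarithm, and `a ≤ 2 (a - b)`
    have h1 : log (a ^ 2 / b ^ 2) ≤ log T :=
      log_le_log (by positivity) (by rw [div_le_iff₀ (by positivity)]; exact hab)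
    have h2 : a ^ 2 ≤ 4 * (a - b) ^ 2 := by nlinarith
    nlinarith [mul_le_mul_of_nonneg_left h1 (sq_nonneg a), mul_le_mul_of_nonneg_left h2 hlogT]

namespace Weighted

variable {ι κ : Type*} [Fintype ι] [Fintype κ]

noncomputable def ent (ν g : ι → ℝ) : ℝ :=
  ∑ x, ν x * (g x * log (g x)) - (∑ x, ν x * g x) * log (∑ x, ν x * g x)

noncomputable def var (ν g : ι → ℝ) : ℝ :=
  ∑ x, ν x * g x ^ 2 - (∑ x, ν x * g x) ^ 2

lemma ent_eq_sum (ν g : ι → ℝ) :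
    ent ν g = ∑ x, ν x * (g x * log (g x) - g x * log (∑ y, ν y * g y)) := by
  simp only [ent, mul_sub, sum_sub_distrib, sum_mul]
  congr 1
  exact sum_congr rfl fun x _ => by ring

lemma ent_eq_sum_of_sum_eq_one {ν : ι → ℝ} (hν : ∑ x, ν x = 1) (g : ι → ℝ) :
    ent ν g = ∑ x, ν x * (g x * log (g x) - g x * log (∑ y, ν y * g y) - g x +
      ∑ y, ν y * g y) := by
  simp only [ent_eq_sum, mul_add, mul_sub, sum_add_distrib, sum_sub_distrib, ← sum_mul, hν]
  ring

lemma sq_sum_mul_le {ν : ι → ℝ} (hν0 : ∀ x, 0 ≤ ν x) (hν : ∑ x, ν x = 1) (g : ι → ℝ) :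
    (∑ x, ν x * g x) ^ 2 ≤ ∑ x, ν x * g x ^ 2 :=
  even_two.convexOn_pow.map_sum_le (fun x _ => hν0 x) hν fun _ _ => Set.mem_univ _

lemma var_nonneg {ν : ι → ℝ} (hν0 : ∀ x, 0 ≤ ν x) (hν : ∑ x, ν x = 1) (g : ι → ℝ) :
    0 ≤ var ν g :=
  sub_nonneg.2 (sq_sum_mul_le hν0 hν g)

lemma ent_sum_le {ν : ι → ℝ} {w : κ → ℝ} {H : κ → ι → ℝ} (hν : ∀ x, 0 ≤ ν x)
    (hw : ∀ z, 0 ≤ w z) (hH : ∀ z x, 0 ≤ H z x) :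
    ent ν (fun x => ∑ z, w z * H z x) ≤ ∑ z, w z * ent ν (H z) := by
  set b : κ → ℝ := fun z => ∑ y, ν y * H z y
  have hb : ∀ z x, ν x * H z x ≤ b z := fun z x =>
    single_le_sum (f := fun y => ν y * H z y) (fun y _ => mul_nonneg (hν y) (hH z y)) (mem_univ x)
  have hmass : ∑ y, ν y * ∑ z, w z * H z y = ∑ z, w z * b z := by
    simp only [b, mul_sum]
    rw [sum_comm]
    exact sum_congr rfl fun z _ => sum_congr rfl fun y _ => by ring
  have hpoint : ∀ x, ν x * ((∑ z, w z * H z x) * log (∑ z, w z * H z x) -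
        (∑ z, w z * H z x) * log (∑ z, w z * b z)) ≤
      ν x * ∑ z, w z * (H z x * log (H z x) - H z x * log (b z)) := fun x => by
    rcases (hν x).eq_or_lt with hx | hx
    · simp [← hx]
    refine mul_le_mul_of_nonneg_left (log_sum_le hw (fun z => hH z x)
      (fun z => (mul_nonneg (hν x) (hH z x)).trans (hb z x)) fun z hz => ?_) hx.le
    exact (mul_eq_zero.1 (le_antisymm (hz ▸ hb z x) (mul_nonneg hx.le (hH z x)))).resolve_left
      hx.ne'
  rw [ent_eq_sum, hmass]
  refine (sum_le_sum fun x _ => hpoint x).trans_eq ?_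
  simp only [ent_eq_sum, mul_sum]
  rw [sum_comm]
  exact sum_congr rfl fun z _ => sum_congr rfl fun x _ => by ring

lemma sum_sq_abs_sub_sqrt_le {ν : ι → ℝ} (hν0 : ∀ x, 0 ≤ ν x) (hν : ∑ x, ν x = 1)
    (F : ι → ℝ) :
    ∑ x, ν x * (|F x| - √(∑ y, ν y * F y ^ 2)) ^ 2 ≤ 2 * var ν F := by
  set v := ∑ y, ν y * F y ^ 2
  set A := ∑ y, ν y * |F y|
  have hv : √v ^ 2 = v := sq_sqrt (sum_nonneg fun y _ => mul_nonneg (hν0 y) (sq_nonneg _))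
  have hA : 0 ≤ A := sum_nonneg fun y _ => mul_nonneg (hν0 y) (abs_nonneg _)
  have hAv : A ≤ √v := by
    refine le_sqrt_of_sq_le ?_
    simpa only [sq_abs] using sq_sum_mul_le hν0 hν fun y => |F y|
  have hmean : |∑ y, ν y * F y| ≤ A := (abs_sum_le_sum_abs _ _).trans_eq <|
    sum_congr rfl fun y _ => by rw [abs_mul, abs_of_nonneg (hν0 y)]
  have hexp : ∑ x, ν x * (|F x| - √v) ^ 2 = 2 * v - 2 * √v * A := by
    simp only [sub_sq, sq_abs, hv, mul_add, mul_sub, sum_add_distrib, sum_sub_distrib, ← sum_mul,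
      hν]
    rw [show ∑ x, ν x * (2 * |F x| * √v) = 2 * √v * A by
      rw [mul_sum]; exact sum_congr rfl fun x _ => by ring]
    ring
  rw [hexp, var]
  nlinarith [sq_abs (∑ y, ν y * F y), abs_nonneg (∑ y, ν y * F y), sqrt_nonneg v]

lemma ent_sq_le_var {ν F : ι → ℝ} {T : ℝ} (hν0 : ∀ x, 0 ≤ ν x) (hν : ∑ x, ν x = 1)
    (hT : 1 ≤ T) (hF : ∀ x, ν x ≠ 0 → F x ^ 2 ≤ T * ∑ y, ν y * F y ^ 2) :
    ent ν (fun x => F x ^ 2) ≤ (18 + 8 * log T) * var ν F := by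
  set v := ∑ y, ν y * F y ^ 2
  have hv : √v ^ 2 = v := sq_sqrt (sum_nonneg fun y _ => mul_nonneg (hν0 y) (sq_nonneg _))
  have hterm : ∀ x, ν x * (F x ^ 2 * log (F x ^ 2) - F x ^ 2 * log v - F x ^ 2 + v) ≤
      (9 + 4 * log T) * (ν x * (|F x| - √v) ^ 2) := by
    intro x
    by_cases hx : ν x = 0
    · simp [hx]
    have := mul_log_sub_le_sq_sub (abs_nonneg (F x)) (sqrt_nonneg v) hT
      (by rw [sq_abs, hv]; exact hF x hx)
    rw [sq_abs, hv] at this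
    nlinarith [hν0 x]
  calc ent ν (fun x => F x ^ 2)
      ≤ (9 + 4 * log T) * ∑ x, ν x * (|F x| - √v) ^ 2 := by
        rw [ent_eq_sum_of_sum_eq_one hν, mul_sum]; exact sum_le_sum fun x _ => hterm x
    _ ≤ (9 + 4 * log T) * (2 * var ν F) :=
        mul_le_mul_of_nonneg_left (sum_sq_abs_sub_sqrt_le hν0 hν F) (by linarith [log_nonneg hT])
    _ = _ := by ring

end Weighted

section Blocks

variable {ℓ N : ℕ}

lemma blockI_subset_Lam {i : ℤ} (hi : i ∈ Icc (1 : ℤ) N) : blockI ℓ i ⊆ Lam ℓ N := by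
  intro x hx
  simp only [blockI, Lam, mem_Icc] at hi hx ⊢
  constructor <;> nlinarith

lemma disjoint_blockI {i j : ℤ} (hij : i ≠ j) : Disjoint (blockI ℓ i) (blockI ℓ j) := by
  rw [disjoint_left]
  intro x hx hx'
  simp only [blockI, mem_Icc] at hx hx'
  rcases hij.lt_or_gt with h | h <;> nlinarith

lemma getS_of_mem (η : S ℓ N) {x : ℤ} (hx : x ∈ Lam ℓ N) : getS ℓ N η x = η ⟨x, hx⟩ :=
  dif_pos hx

noncomputable def blockSites (ℓ N : ℕ) (i : ℤ) : Finset ↥(Lam ℓ N) :=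
  univ.filter fun y => (y : ℤ) ∈ blockI ℓ i

@[simp]
lemma mem_blockSites {i : ℤ} {y : ↥(Lam ℓ N)} : y ∈ blockSites ℓ N i ↔ (y : ℤ) ∈ blockI ℓ i := by
  simp [blockSites]

lemma card_blockSites {i : ℤ} (hi : i ∈ Icc (1 : ℤ) N) : #(blockSites ℓ N i) = ℓ + 1 := by
  have : blockSites ℓ N i = (blockI ℓ i).subtype (· ∈ Lam ℓ N) := by ext; simp
  rw [this, card_subtype, filter_true_of_mem (blockI_subset_Lam hi), blockI, Int.card_Icc]
  omega

def BlockInfected (ℓ N : ℕ) (i : ℤ) (η : S ℓ N) : Prop :=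
  ∃ x ∈ blockI ℓ i, getS ℓ N η x = false

lemma blockInfected_congr {i : ℤ} (hi : i ∈ Icc (1 : ℤ) N) {η η' : S ℓ N}
    (h : ∀ y ∈ blockSites ℓ N i, η y = η' y) :
    BlockInfected ℓ N i η ↔ BlockInfected ℓ N i η' := by
  have key : ∀ x ∈ blockI ℓ i, getS ℓ N η x = getS ℓ N η' x := fun x hx => by
    have hx' := blockI_subset_Lam hi hx
    rw [getS_of_mem η hx', getS_of_mem η' hx', h _ (mem_blockSites.2 hx)]
  unfold BlockInfected
  exact exists_congr fun x => and_congr_right fun hx => by rw [key x hx]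

lemma blockInfected_false {i : ℤ} (hi : i ∈ Icc (1 : ℤ) N) :
    BlockInfected ℓ N i fun _ => false := by
  have hx : i * ((ℓ : ℤ) + 1) ∈ blockI ℓ i := by simp [blockI]
  exact ⟨_, hx, getS_of_mem _ (blockI_subset_Lam hi hx)⟩

lemma goodCfg_false : goodCfg ℓ N fun _ => false := fun _ hi => blockInfected_false hi

end Blocks

section Patch

variable {ℓ N : ℕ} {i j : ℤ}

lemma patch_patch_left (η ζ ξ : S ℓ N) :
    patch ℓ N i (patch ℓ N i η ζ) ξ = patch ℓ N i η ξ := by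
  funext y; by_cases h : (y : ℤ) ∈ blockI ℓ i <;> simp [patch, h]

lemma patch_patch_swap (η ζ : S ℓ N) :
    patch ℓ N i (patch ℓ N i η ζ) (patch ℓ N i ζ η) = η := by
  funext y; by_cases h : (y : ℤ) ∈ blockI ℓ i <;> simp [patch, h]

lemma patch_comm (hij : i ≠ j) (η ζ ξ : S ℓ N) :
    patch ℓ N j (patch ℓ N i η ξ) ζ = patch ℓ N i (patch ℓ N j η ζ) ξ := by
  funext y
  by_cases hi : (y : ℤ) ∈ blockI ℓ i
  · have hj : (y : ℤ) ∉ blockI ℓ j := disjoint_left.1 (disjoint_blockI hij) hi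
    simp [patch, hi, hj]
  · by_cases hj : (y : ℤ) ∈ blockI ℓ j <;> simp [patch, hi, hj]

lemma patch_congr_right (η : S ℓ N) {ζ ζ' : S ℓ N}
    (h : ∀ y ∈ blockSites ℓ N i, ζ y = ζ' y) : patch ℓ N i η ζ = patch ℓ N i η ζ' := by
  funext y
  by_cases hy : (y : ℤ) ∈ blockI ℓ i
  · simp only [patch, hy, if_true]; exact h y (mem_blockSites.2 hy)
  · simp [patch, hy]

lemma blockInfected_patch (hi : i ∈ Icc (1 : ℤ) N) (η ζ : S ℓ N) :
    BlockInfected ℓ N i (patch ℓ N i η ζ) ↔ BlockInfected ℓ N i ζ :=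
  blockInfected_congr hi fun y hy => by simp_all [patch]

lemma blockInfected_patch_of_ne (hj : j ∈ Icc (1 : ℤ) N) (hij : i ≠ j) (η ζ : S ℓ N) :
    BlockInfected ℓ N j (patch ℓ N i η ζ) ↔ BlockInfected ℓ N j η :=
  blockInfected_congr hj fun y hy => by
    have : (y : ℤ) ∉ blockI ℓ i := disjoint_right.1 (disjoint_blockI hij) (mem_blockSites.1 hy)
    simp [patch, this]

def OthersInfected (ℓ N : ℕ) (i : ℤ) (η : S ℓ N) : Prop :=
  ∀ j ∈ Icc (1 : ℤ) N, j ≠ i → BlockInfected ℓ N j η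

lemma goodCfg_iff (hi : i ∈ Icc (1 : ℤ) N) (η : S ℓ N) :
    goodCfg ℓ N η ↔ OthersInfected ℓ N i η ∧ BlockInfected ℓ N i η :=
  ⟨fun h => ⟨fun j hj _ => h j hj, h i hi⟩, fun ⟨h, hi'⟩ j hj =>
    if hji : j = i then hji ▸ hi' else h j hj hji⟩

lemma goodCfg_patch_iff (hi : i ∈ Icc (1 : ℤ) N) (η ζ : S ℓ N) :
    goodCfg ℓ N (patch ℓ N i η ζ) ↔ OthersInfected ℓ N i η ∧ BlockInfected ℓ N i ζ := by
  rw [goodCfg_iff hi, blockInfected_patch hi]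
  refine and_congr_left' (forall₂_congr fun j hj => imp_congr_right fun hji => ?_)
  exact blockInfected_patch_of_ne hj (Ne.symm hji) η ζ

end Patch

section Weights

variable {q : ℝ} {ℓ N : ℕ} {i : ℤ}

noncomputable def wIn (q : ℝ) (ℓ N : ℕ) (i : ℤ) (η : S ℓ N) : ℝ :=
  ∏ y ∈ blockSites ℓ N i, if η y then 1 - q else q

noncomputable def wOut (q : ℝ) (ℓ N : ℕ) (i : ℤ) (η : S ℓ N) : ℝ :=
  ∏ y ∈ (blockSites ℓ N i)ᶜ, if η y then 1 - q else q

lemma wS_eq_wIn_mul_wOut (η : S ℓ N) : wS q ℓ N η = wIn q ℓ N i η * wOut q ℓ N i η :=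
  (prod_mul_prod_compl _ _).symm

lemma blockW_eq (ζ : S ℓ N) :
    blockW q ℓ N i ζ = if BlockInfected ℓ N i ζ then wIn q ℓ N i ζ else 0 := by
  rw [blockW, wIn, blockSites, BlockInfected]; split_ifs <;> simp

lemma wIn_patch (η ζ : S ℓ N) : wIn q ℓ N i (patch ℓ N i η ζ) = wIn q ℓ N i ζ :=
  prod_congr rfl fun y hy => by simp_all [patch]

lemma wOut_patch (η ζ : S ℓ N) : wOut q ℓ N i (patch ℓ N i η ζ) = wOut q ℓ N i η :=
  prod_congr rfl fun y hy => by simp_all [patch]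

lemma wS_pos (hq0 : 0 < q) (hq1 : q < 1) (η : S ℓ N) : 0 < wS q ℓ N η :=
  prod_pos fun _ _ => by split <;> linarith

lemma wIn_pos (hq0 : 0 < q) (hq1 : q < 1) (η : S ℓ N) : 0 < wIn q ℓ N i η :=
  prod_pos fun _ _ => by split <;> linarith

lemma blockW_nonneg (hq0 : 0 < q) (hq1 : q < 1) (ζ : S ℓ N) : 0 ≤ blockW q ℓ N i ζ := by
  rw [blockW_eq]; split
  · exact (wIn_pos hq0 hq1 ζ).le
  · exact le_rfl

lemma sum_blockW_pos (hq0 : 0 < q) (hq1 : q < 1) (hi : i ∈ Icc (1 : ℤ) N) :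
    0 < ∑ ζ : S ℓ N, blockW q ℓ N i ζ := by
  refine sum_pos' (fun ζ _ => blockW_nonneg hq0 hq1 ζ) ⟨fun _ => false, mem_univ _, ?_⟩
  rw [blockW_eq, if_pos (blockInfected_false hi)]
  exact wIn_pos hq0 hq1 _

noncomputable def goodW (q : ℝ) (ℓ N : ℕ) (η : S ℓ N) : ℝ :=
  if goodCfg ℓ N η then wS q ℓ N η else 0

lemma goodW_nonneg (hq0 : 0 < q) (hq1 : q < 1) (η : S ℓ N) : 0 ≤ goodW q ℓ N η := by
  rw [goodW]; split
  · exact (wS_pos hq0 hq1 η).le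
  · exact le_rfl

lemma sum_goodW_pos (hq0 : 0 < q) (hq1 : q < 1) : 0 < ∑ η : S ℓ N, goodW q ℓ N η := by
  refine sum_pos' (fun η _ => goodW_nonneg hq0 hq1 η) ⟨fun _ => false, mem_univ _, ?_⟩
  rw [goodW, if_pos goodCfg_false]
  exact wS_pos hq0 hq1 _

lemma goodW_mul_blockW_swap (hi : i ∈ Icc (1 : ℤ) N) (η ζ : S ℓ N) :
    goodW q ℓ N η * blockW q ℓ N i ζ =
      goodW q ℓ N (patch ℓ N i η ζ) * blockW q ℓ N i (patch ℓ N i ζ η) := by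
  simp only [goodW, blockW_eq, goodCfg_iff hi η, goodCfg_patch_iff hi, blockInfected_patch hi,
    wS_eq_wIn_mul_wOut (i := i), wIn_patch, wOut_patch]
  split_ifs <;> simp_all [mul_comm, mul_left_comm]

/-- `π̂` is invariant under resampling block `i` from `π̂_{Λ_i}`: exchanging the contents of
block `i` between `η` and `ζ` is an involution that preserves the weights. -/
lemma sum_goodW_mul_sum_blockW (hi : i ∈ Icc (1 : ℤ) N) (g : S ℓ N → ℝ) :
    ∑ η, goodW q ℓ N η * ∑ ζ, blockW q ℓ N i ζ * g (patch ℓ N i η ζ) =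
      (∑ ζ, blockW q ℓ N i ζ) * ∑ η, goodW q ℓ N η * g η := by
  let σ : S ℓ N × S ℓ N → S ℓ N × S ℓ N := fun p => (patch ℓ N i p.1 p.2, patch ℓ N i p.2 p.1)
  have hσ : Function.Involutive σ := fun p => by simp only [σ, patch_patch_swap]
  calc ∑ η, goodW q ℓ N η * ∑ ζ, blockW q ℓ N i ζ * g (patch ℓ N i η ζ)
      = ∑ p : S ℓ N × S ℓ N, goodW q ℓ N (σ p).1 * blockW q ℓ N i (σ p).2 * g (σ p).1 := by
        rw [Fintype.sum_prod_type]
        refine sum_congr rfl fun η _ => ?_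
        rw [mul_sum]
        refine sum_congr rfl fun ζ _ => ?_
        rw [← mul_assoc, goodW_mul_blockW_swap hi]
    _ = ∑ p : S ℓ N × S ℓ N, goodW q ℓ N p.1 * blockW q ℓ N i p.2 * g p.1 :=
        Fintype.sum_bijective σ hσ.bijective _ _ fun _ => rfl
    _ = _ := by
        rw [Fintype.sum_prod_type, mul_sum]
        refine sum_congr rfl fun η _ => ?_
        rw [sum_mul]
        exact sum_congr rfl fun ζ _ => by ring

end Weights

section Averages

variable {q : ℝ} {ℓ N : ℕ} {i j : ℤ}

lemma phat_eq (η : S ℓ N) : phat q ℓ N η = goodW q ℓ N η / ∑ ξ, goodW q ℓ N ξ := by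
  have hZ : ∑ ξ ∈ GoodSet ℓ N, wS q ℓ N ξ = ∑ ξ, goodW q ℓ N ξ := by
    rw [GoodSet, sum_filter]; rfl
  rw [phat, goodW, hZ]; split_ifs <;> simp

lemma avg_eq (g : S ℓ N → ℝ) :
    avg q ℓ N g = (∑ η, goodW q ℓ N η * g η) / ∑ η, goodW q ℓ N η := by
  rw [avg, GoodSet, sum_filter, sum_div]
  refine sum_congr rfl fun η _ => ?_
  rw [phat_eq]
  split_ifs with h <;> simp [goodW, h, div_mul_eq_mul_div]

lemma phat_nonneg (hq0 : 0 < q) (hq1 : q < 1) (η : S ℓ N) : 0 ≤ phat q ℓ N η := by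
  rw [phat_eq]
  exact div_nonneg (goodW_nonneg hq0 hq1 η) (sum_goodW_pos hq0 hq1).le

lemma avg_mono (hq0 : 0 < q) (hq1 : q < 1) {g g' : S ℓ N → ℝ} (h : ∀ η, g η ≤ g' η) :
    avg q ℓ N g ≤ avg q ℓ N g' :=
  sum_le_sum fun η _ => mul_le_mul_of_nonneg_left (h η) (phat_nonneg hq0 hq1 η)

lemma avg_nonneg (hq0 : 0 < q) (hq1 : q < 1) {g : S ℓ N → ℝ} (h : ∀ η, 0 ≤ g η) :
    0 ≤ avg q ℓ N g :=
  sum_nonneg fun η _ => mul_nonneg (phat_nonneg hq0 hq1 η) (h η)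

lemma avg_sub (g g' : S ℓ N → ℝ) :
    avg q ℓ N (fun η => g η - g' η) = avg q ℓ N g - avg q ℓ N g' := by
  simp only [avg, mul_sub, sum_sub_distrib]

lemma avg_const_mul (c : ℝ) (g : S ℓ N → ℝ) :
    avg q ℓ N (fun η => c * g η) = c * avg q ℓ N g := by
  simp only [avg, mul_sum, mul_left_comm]

lemma avg_const (hq0 : 0 < q) (hq1 : q < 1) (c : ℝ) : avg q ℓ N (fun _ => c) = c := by
  rw [avg_eq, ← sum_mul, mul_div_cancel_left₀ _ (sum_goodW_pos hq0 hq1).ne']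

noncomputable def blockProb (q : ℝ) (ℓ N : ℕ) (i : ℤ) (ζ : S ℓ N) : ℝ :=
  blockW q ℓ N i ζ / ∑ ξ, blockW q ℓ N i ξ

lemma blockProb_nonneg (hq0 : 0 < q) (hq1 : q < 1) (ζ : S ℓ N) : 0 ≤ blockProb q ℓ N i ζ :=
  div_nonneg (blockW_nonneg hq0 hq1 ζ) (sum_nonneg fun ξ _ => blockW_nonneg hq0 hq1 ξ)

lemma sum_blockProb (hq0 : 0 < q) (hq1 : q < 1) (hi : i ∈ Icc (1 : ℤ) N) :
    ∑ ζ : S ℓ N, blockProb q ℓ N i ζ = 1 := by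
  simp only [blockProb]
  rw [← sum_div, div_self (sum_blockW_pos hq0 hq1 hi).ne']

lemma condE_eq (g : S ℓ N → ℝ) (η : S ℓ N) :
    condE q ℓ N i g η = ∑ ζ, blockProb q ℓ N i ζ * g (patch ℓ N i η ζ) := by
  rw [condE, sum_div]
  exact sum_congr rfl fun ζ _ => by rw [blockProb, div_mul_eq_mul_div]

lemma condE_mono (hq0 : 0 < q) (hq1 : q < 1) {g g' : S ℓ N → ℝ} (h : ∀ η, g η ≤ g' η)
    (η : S ℓ N) : condE q ℓ N i g η ≤ condE q ℓ N i g' η := by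
  simp only [condE_eq]
  exact sum_le_sum fun ζ _ => mul_le_mul_of_nonneg_left (h _) (blockProb_nonneg hq0 hq1 ζ)

lemma condE_nonneg (hq0 : 0 < q) (hq1 : q < 1) {g : S ℓ N → ℝ} (h : ∀ η, 0 ≤ g η)
    (η : S ℓ N) : 0 ≤ condE q ℓ N i g η := by
  rw [condE_eq]
  exact sum_nonneg fun ζ _ => mul_nonneg (blockProb_nonneg hq0 hq1 ζ) (h _)

lemma avg_condE (hq0 : 0 < q) (hq1 : q < 1) (hi : i ∈ Icc (1 : ℤ) N) (g : S ℓ N → ℝ) :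
    avg q ℓ N (condE q ℓ N i g) = avg q ℓ N g := by
  rw [avg_eq, avg_eq]
  congr 1
  simp only [condE, mul_div_assoc']
  rw [← sum_div, sum_goodW_mul_sum_blockW hi,
    mul_div_cancel_left₀ _ (sum_blockW_pos hq0 hq1 hi).ne']

def IndepOfBlock (ℓ N : ℕ) (i : ℤ) (h : S ℓ N → ℝ) : Prop :=
  ∀ η ζ, h (patch ℓ N i η ζ) = h η

lemma indepOfBlock_condE (g : S ℓ N → ℝ) : IndepOfBlock ℓ N i (condE q ℓ N i g) := by
  intro η ζ
  simp only [condE, patch_patch_left]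

lemma IndepOfBlock.condE (hij : i ≠ j) {h : S ℓ N → ℝ} (hh : IndepOfBlock ℓ N j h) :
    IndepOfBlock ℓ N j (condE q ℓ N i h) := by
  intro η ζ
  unfold IndepOfBlock at hh
  simp only [_root_.condE, ← patch_comm hij, hh]

lemma condE_mul_of_indepOfBlock {g h : S ℓ N → ℝ} (hh : IndepOfBlock ℓ N i h) (η : S ℓ N) :
    condE q ℓ N i (fun ξ => g ξ * h ξ) η = condE q ℓ N i g η * h η := by
  simp only [condE_eq, hh η, sum_mul, mul_assoc]

lemma avg_mul_of_indepOfBlock (hq0 : 0 < q) (hq1 : q < 1) (hi : i ∈ Icc (1 : ℤ) N)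
    (g : S ℓ N → ℝ) {h : S ℓ N → ℝ} (hh : IndepOfBlock ℓ N i h) :
    avg q ℓ N (fun η => g η * h η) = avg q ℓ N (fun η => condE q ℓ N i g η * h η) := by
  rw [← avg_condE hq0 hq1 hi fun η => g η * h η]
  exact congrArg _ (funext (condE_mul_of_indepOfBlock hh))

noncomputable def condEnt (q : ℝ) (ℓ N : ℕ) (i : ℤ) (g : S ℓ N → ℝ) (η : S ℓ N) : ℝ :=
  condE q ℓ N i (fun ξ => g ξ * log (g ξ)) η - condE q ℓ N i g η * log (condE q ℓ N i g η)

lemma condEnt_eq (g : S ℓ N → ℝ) (η : S ℓ N) :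
    condEnt q ℓ N i g η = Weighted.ent (blockProb q ℓ N i) fun ζ => g (patch ℓ N i η ζ) := by
  simp only [condEnt, Weighted.ent, condE_eq]

lemma condVar_eq (f : S ℓ N → ℝ) (η : S ℓ N) :
    condVar q ℓ N i f η = Weighted.var (blockProb q ℓ N i) fun ζ => f (patch ℓ N i η ζ) := by
  simp only [condVar, Weighted.var, condE_eq]

lemma condVar_nonneg (hq0 : 0 < q) (hq1 : q < 1) (hi : i ∈ Icc (1 : ℤ) N) (f : S ℓ N → ℝ)
    (η : S ℓ N) : 0 ≤ condVar q ℓ N i f η := by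
  rw [condVar_eq]
  exact Weighted.var_nonneg (blockProb_nonneg hq0 hq1) (sum_blockProb hq0 hq1 hi) _

lemma condEnt_condE_le (hq0 : 0 < q) (hq1 : q < 1) (hij : i ≠ j) {h : S ℓ N → ℝ}
    (hh : ∀ η, 0 ≤ h η) (η : S ℓ N) :
    condEnt q ℓ N i (condE q ℓ N j h) η ≤ condE q ℓ N j (condEnt q ℓ N i h) η := by
  have hcomm : ∀ ξ, condE q ℓ N j h (patch ℓ N i η ξ) =
      ∑ ζ, blockProb q ℓ N j ζ * h (patch ℓ N i (patch ℓ N j η ζ) ξ) := fun ξ => by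
    simp only [condE_eq, patch_comm hij]
  simp only [condEnt_eq, hcomm, condE_eq (g := condEnt q ℓ N i h)]
  exact Weighted.ent_sum_le (blockProb_nonneg hq0 hq1) (blockProb_nonneg hq0 hq1) fun _ _ => hh _

end Averages

section Tensorization

variable {q : ℝ} {ℓ N : ℕ}

noncomputable def condEUpTo (q : ℝ) (ℓ N : ℕ) : ℕ → (S ℓ N → ℝ) → S ℓ N → ℝ
  | 0, g => g
  | k + 1, g => condE q ℓ N ((k : ℤ) + 1) (condEUpTo q ℓ N k g)

lemma natCast_add_one_mem_Icc {k : ℕ} (hk : k < N) : ((k : ℤ) + 1) ∈ Icc (1 : ℤ) N := by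
  simp only [mem_Icc]; omega

lemma indepOfBlock_condEUpTo (g : S ℓ N → ℝ) {k m : ℕ} (hm : 1 ≤ m) (hmk : m ≤ k) :
    IndepOfBlock ℓ N m (condEUpTo q ℓ N k g) := by
  induction k with
  | zero => omega
  | succ k ih =>
    rcases hmk.eq_or_lt with rfl | hlt
    · exact_mod_cast indepOfBlock_condE (condEUpTo q ℓ N k g)
    · exact (ih (by omega)).condE (by omega)

lemma condEUpTo_nonneg (hq0 : 0 < q) (hq1 : q < 1) (k : ℕ) {g : S ℓ N → ℝ}
    (hg : ∀ η, 0 ≤ g η) (η : S ℓ N) : 0 ≤ condEUpTo q ℓ N k g η := by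
  induction k generalizing η with
  | zero => exact hg η
  | succ k ih => exact condE_nonneg hq0 hq1 ih η

lemma avg_condEUpTo (hq0 : 0 < q) (hq1 : q < 1) {k : ℕ} (hk : k ≤ N) (g : S ℓ N → ℝ) :
    avg q ℓ N (condEUpTo q ℓ N k g) = avg q ℓ N g := by
  induction k with
  | zero => rfl
  | succ k ih => exact (avg_condE hq0 hq1 (natCast_add_one_mem_Icc hk) _).trans (ih (by omega))

lemma avg_mul_condEUpTo (hq0 : 0 < q) (hq1 : q < 1) {k : ℕ} (hk : k ≤ N) (g : S ℓ N → ℝ)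
    {h : S ℓ N → ℝ} (hh : ∀ m : ℕ, 1 ≤ m → m ≤ k → IndepOfBlock ℓ N m h) :
    avg q ℓ N (fun η => g η * h η) = avg q ℓ N (fun η => condEUpTo q ℓ N k g η * h η) := by
  induction k with
  | zero => rfl
  | succ k ih =>
    rw [ih (by omega) fun m hm hmk => hh m hm (by omega)]
    exact avg_mul_of_indepOfBlock hq0 hq1 (natCast_add_one_mem_Icc hk) _
      (by exact_mod_cast hh (k + 1) (by omega) le_rfl)

lemma condEnt_condEUpTo_le (hq0 : 0 < q) (hq1 : q < 1) {i : ℤ} {k : ℕ} (hki : (k : ℤ) < i)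
    {g : S ℓ N → ℝ} (hg : ∀ η, 0 ≤ g η) (η : S ℓ N) :
    condEnt q ℓ N i (condEUpTo q ℓ N k g) η ≤ condEUpTo q ℓ N k (condEnt q ℓ N i g) η := by
  induction k generalizing η with
  | zero => exact le_rfl
  | succ k ih =>
    exact (condEnt_condE_le hq0 hq1 (by omega) (condEUpTo_nonneg hq0 hq1 k hg) η).trans
      (condE_mono hq0 hq1 (ih (by omega)) η)

lemma avg_mul_log_condEUpTo_sub (hq0 : 0 < q) (hq1 : q < 1) {k : ℕ} (hk : k < N)
    (g : S ℓ N → ℝ) :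
    avg q ℓ N (fun η => g η * log (condEUpTo q ℓ N k g η)) -
        avg q ℓ N (fun η => g η * log (condEUpTo q ℓ N (k + 1) g η)) =
      avg q ℓ N (condEnt q ℓ N ((k : ℤ) + 1) (condEUpTo q ℓ N k g)) := by
  have hi := natCast_add_one_mem_Icc hk
  set u := condEUpTo q ℓ N k g
  set u' := condE q ℓ N ((k : ℤ) + 1) u
  have hu' : IndepOfBlock ℓ N ((k : ℤ) + 1) fun η => log (u' η) := fun η ζ => by
    simp only [u', indepOfBlock_condE u η ζ]
  have hψ : ∀ m : ℕ, 1 ≤ m → m ≤ k → IndepOfBlock ℓ N m fun η => log (u η) - log (u' η) :=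
    fun m hm hmk η ζ => by
      have hum : IndepOfBlock ℓ N m u := indepOfBlock_condEUpTo g hm hmk
      have hu'm : IndepOfBlock ℓ N m u' := hum.condE (by omega)
      simp only [hum η ζ, hu'm η ζ]
  calc avg q ℓ N (fun η => g η * log (u η)) - avg q ℓ N (fun η => g η * log (u' η))
      = avg q ℓ N (fun η => g η * (log (u η) - log (u' η))) := by
        rw [← avg_sub]; simp only [mul_sub]
    _ = avg q ℓ N (fun η => u η * log (u η)) - avg q ℓ N (fun η => u η * log (u' η)) := by
        rw [avg_mul_condEUpTo hq0 hq1 hk.le g hψ, ← avg_sub]; simp only [mul_sub]; rfl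
    _ = avg q ℓ N (condE q ℓ N ((k : ℤ) + 1) fun η => u η * log (u η)) -
          avg q ℓ N (fun η => u' η * log (u' η)) := by
        rw [avg_condE hq0 hq1 hi, avg_mul_of_indepOfBlock hq0 hq1 hi u hu']
    _ = _ := (avg_sub _ _).symm

lemma eq_of_indepOfBlock {h : S ℓ N → ℝ} (hh : ∀ i ∈ Icc (1 : ℤ) N, IndepOfBlock ℓ N i h)
    (η η' : S ℓ N) : h η = h η' := by
  -- `ρ n` agrees with `η'` on the blocks `Λ_1, …, Λ_n` and with `η` elsewhere
  let ρ : ℕ → S ℓ N := fun n y => if (y : ℤ) ≤ n * ((ℓ : ℤ) + 1) then η' y else η y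
  have hstep : ∀ n, ρ (n + 1) = patch ℓ N ((n : ℤ) + 1) (ρ n) η' := fun n => by
    funext y
    have e : ((n : ℤ) + 1) * ((ℓ : ℤ) + 1) = n * (ℓ + 1) + ℓ + 1 := by ring
    simp only [ρ, patch, blockI, mem_Icc, Nat.cast_succ, e]
    split_ifs <;> first | rfl | omega
  have hρ : ∀ n ≤ N, h (ρ n) = h η := by
    intro n hn
    induction n with
    | zero =>
      congr 1; funext y
      simp only [ρ, Nat.cast_zero, zero_mul, ite_eq_right_iff]
      intro hy; have := (mem_Icc.1 y.2).1; omega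
    | succ n ih => rw [hstep, hh _ (natCast_add_one_mem_Icc hn), ih (by omega)]
  have hN : ρ N = η' := funext fun y => if_pos (mem_Icc.1 y.2).2
  rw [← hρ N le_rfl, hN]

lemma condEUpTo_eq_avg (hq0 : 0 < q) (hq1 : q < 1) (g : S ℓ N → ℝ) (η : S ℓ N) :
    condEUpTo q ℓ N N g η = avg q ℓ N g := by
  have hconst : ∀ η', condEUpTo q ℓ N N g η' = condEUpTo q ℓ N N g η := fun η' =>
    eq_of_indepOfBlock (fun i hi => by
      obtain ⟨m, rfl⟩ := Int.eq_ofNat_of_zero_le (by linarith [(mem_Icc.1 hi).1] : (0 : ℤ) ≤ i)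
      exact indepOfBlock_condEUpTo g (by simp at hi; omega) (by simp at hi; omega)) η' η
  rw [← avg_condEUpTo hq0 hq1 le_rfl g, funext hconst, avg_const hq0 hq1]

lemma sum_Icc_one_eq_sum_range (f : ℤ → ℝ) :
    ∑ i ∈ Icc (1 : ℤ) N, f i = ∑ k ∈ range N, f ((k : ℤ) + 1) := by
  refine sum_nbij' (fun i => (i - 1).toNat) (fun k => (k : ℤ) + 1) ?_ ?_ ?_ ?_ ?_ <;>
    intro x hx <;> simp at hx ⊢ <;> first | omega | (congr 1; omega)

lemma entS_le_sum_avg_condEnt (hq0 : 0 < q) (hq1 : q < 1) {g : S ℓ N → ℝ}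
    (hg : ∀ η, 0 ≤ g η) :
    entS q ℓ N g ≤ ∑ i ∈ Icc (1 : ℤ) N, avg q ℓ N (condEnt q ℓ N i g) := by
  set a : ℕ → ℝ := fun k => avg q ℓ N fun η => g η * log (condEUpTo q ℓ N k g η)
  have hent : entS q ℓ N g = a 0 - a N := by
    simp only [a, condEUpTo_eq_avg hq0 hq1, mul_comm (g _) (log (avg q ℓ N g)), avg_const_mul]
    rw [entS, mul_comm]; rfl
  rw [hent, ← sum_range_sub', sum_Icc_one_eq_sum_range]
  refine sum_le_sum fun k hk => ?_
  have hk := mem_range.1 hk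
  rw [avg_mul_log_condEUpTo_sub hq0 hq1 hk]
  refine (avg_mono hq0 hq1 (condEnt_condEUpTo_le hq0 hq1 (by omega) hg)).trans_eq ?_
  exact avg_condEUpTo hq0 hq1 hk.le _

end Tensorization

section BlockLogSobolev

variable {q : ℝ} {ℓ N : ℕ} {i : ℤ}

lemma sum_prod_bool {α : Type*} [Fintype α] [DecidableEq α] (c : α → Bool → ℝ) :
    ∑ ζ : α → Bool, ∏ y, c y (ζ y) = ∏ y, (c y true + c y false) := by
  simp_rw [← Fintype.sum_bool]
  exact (Fintype.prod_sum _).symm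

lemma sum_wIn : ∑ ζ : S ℓ N, wIn q ℓ N i ζ =
    ∏ y : ↥(Lam ℓ N), if y ∈ blockSites ℓ N i then 1 else 2 := by
  calc ∑ ζ : S ℓ N, wIn q ℓ N i ζ
      = ∑ ζ : S ℓ N, ∏ y, if y ∈ blockSites ℓ N i then (if ζ y then 1 - q else q) else 1 :=
        sum_congr rfl fun ζ _ => (Fintype.prod_ite_mem _ _).symm
    _ = _ := (sum_prod_bool fun y b =>
        if y ∈ blockSites ℓ N i then (if b then 1 - q else q) else 1).trans
          (prod_congr rfl fun y _ => by by_cases hy : y ∈ blockSites ℓ N i <;> norm_num [hy])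

lemma card_agreeOn (ξ : S ℓ N) :
    (#(univ.filter fun ζ : S ℓ N => ∀ y ∈ blockSites ℓ N i, ζ y = ξ y) : ℝ) =
      ∏ y : ↥(Lam ℓ N), if y ∈ blockSites ℓ N i then 1 else 2 := by
  calc (#(univ.filter fun ζ : S ℓ N => ∀ y ∈ blockSites ℓ N i, ζ y = ξ y) : ℝ)
      = ∑ ζ : S ℓ N, ∏ y, if y ∈ blockSites ℓ N i → ζ y = ξ y then (1 : ℝ) else 0 := by
        rw [natCast_card_filter]
        exact sum_congr rfl fun ζ _ => by rw [Fintype.prod_boole]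
    _ = _ := (sum_prod_bool fun y b => if y ∈ blockSites ℓ N i → b = ξ y then 1 else 0).trans
        (prod_congr rfl fun y _ => by
          by_cases hy : y ∈ blockSites ℓ N i <;> cases ξ y <;> simp [hy] <;> norm_num)

/-- The block configuration of `ξ` has `π̂_{Λ_i}`-probability at least `min(q, p)^(ℓ+1)`. -/
lemma pow_mul_sum_blockW_le (hq0 : 0 < q) (hq1 : q < 1) (hi : i ∈ Icc (1 : ℤ) N)
    {ξ : S ℓ N} (hξ : BlockInfected ℓ N i ξ) {G : S ℓ N → ℝ} (hG : ∀ ζ, 0 ≤ G ζ)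
    (hGξ : ∀ ζ, (∀ y ∈ blockSites ℓ N i, ζ y = ξ y) → G ζ = G ξ) :
    min q (1 - q) ^ (ℓ + 1) * (∑ ζ, blockW q ℓ N i ζ) * G ξ ≤ ∑ ζ, blockW q ℓ N i ζ * G ζ := by
  set C := univ.filter fun ζ : S ℓ N => ∀ y ∈ blockSites ℓ N i, ζ y = ξ y
  have hwC : ∀ ζ ∈ C, blockW q ℓ N i ζ = wIn q ℓ N i ξ := fun ζ hζ => by
    have hζ := (mem_filter.1 hζ).2
    rw [blockW_eq, if_pos ((blockInfected_congr hi hζ).2 hξ)]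
    exact prod_congr rfl fun y hy => by rw [hζ y hy]
  have hmin : min q (1 - q) ^ (ℓ + 1) ≤ wIn q ℓ N i ξ := by
    rw [← card_blockSites hi, ← prod_const]
    exact prod_le_prod (fun _ _ => (lt_min hq0 (by linarith)).le) fun y _ => by
      split
      · exact min_le_right _ _
      · exact min_le_left _ _
  have hZ : ∑ ζ, blockW q ℓ N i ζ ≤ #C := by
    rw [card_agreeOn, ← sum_wIn]
    refine sum_le_sum fun ζ _ => ?_
    rw [blockW_eq]; split
    · exact le_rfl
    · exact (wIn_pos hq0 hq1 ζ).le
  calc min q (1 - q) ^ (ℓ + 1) * (∑ ζ, blockW q ℓ N i ζ) * G ξ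
      ≤ wIn q ℓ N i ξ * #C * G ξ :=
        mul_le_mul_of_nonneg_right (mul_le_mul hmin hZ
          (sum_nonneg fun ζ _ => blockW_nonneg hq0 hq1 ζ) (wIn_pos hq0 hq1 ξ).le) (hG ξ)
    _ = ∑ ζ ∈ C, blockW q ℓ N i ζ * G ζ := by
        rw [sum_congr rfl fun ζ hζ => by rw [hwC ζ hζ, hGξ ζ (mem_filter.1 hζ).2], sum_const,
          nsmul_eq_mul]
        ring
    _ ≤ ∑ ζ, blockW q ℓ N i ζ * G ζ :=
        sum_le_sum_of_subset_of_nonneg (subset_univ C) fun ζ _ _ =>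
          mul_nonneg (blockW_nonneg hq0 hq1 ζ) (hG ζ)

lemma condEnt_sq_le_condVar (hq0 : 0 < q) (hq1 : q < 1) (hi : i ∈ Icc (1 : ℤ) N)
    (f : S ℓ N → ℝ) (η : S ℓ N) :
    condEnt q ℓ N i (fun ξ => f ξ ^ 2) η ≤
      (18 + 8 * ((ℓ + 1) * log (min q (1 - q))⁻¹)) * condVar q ℓ N i f η := by
  have hm : 0 < min q (1 - q) := lt_min hq0 (by linarith)
  have hT : 1 ≤ (min q (1 - q))⁻¹ ^ (ℓ + 1) :=
    one_le_pow₀ (one_le_inv_iff₀.2 ⟨hm, (min_le_left _ _).trans hq1.le⟩)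
  have hZ := sum_blockW_pos hq0 hq1 hi (q := q) (ℓ := ℓ)
  rw [condEnt_eq, condVar_eq, show ((ℓ : ℝ) + 1) * log (min q (1 - q))⁻¹ =
    log ((min q (1 - q))⁻¹ ^ (ℓ + 1)) by rw [log_pow]; push_cast; ring]
  refine Weighted.ent_sq_le_var (blockProb_nonneg hq0 hq1) (sum_blockProb hq0 hq1 hi) hT
    fun ξ hξ => ?_
  have hξ' : BlockInfected ℓ N i ξ := by
    by_contra h
    exact hξ (by rw [blockProb, blockW_eq, if_neg h, zero_div])
  have := pow_mul_sum_blockW_le hq0 hq1 hi hξ' (G := fun ζ => f (patch ℓ N i η ζ) ^ 2)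
    (fun _ => sq_nonneg _) fun ζ hζ => by rw [patch_congr_right η hζ]
  simp only [blockProb, div_mul_eq_mul_div, ← sum_div]
  rw [inv_pow, ← div_eq_inv_mul, le_div_iff₀ (by positivity), le_div_iff₀ hZ]
  linarith

end BlockLogSobolev

/-- there is a constant `c_q`, depending only on `q ∈ (0,1)`, such that for
all `ℓ, N ≥ 1` and every `f`:
`Ent_{π̂}(f²) ≤ c_q ℓ ∑_{i=1}^N π̂(Var_{π̂_{Λ_i}}(f))`. -/
theorem stmt15 (q : ℝ) (hq0 : 0 < q) (hq1 : q < 1) :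
    ∃ c : ℝ, 0 < c ∧ ∀ ℓ N : ℕ, 1 ≤ ℓ → 1 ≤ N → ∀ f : S ℓ N → ℝ,
      entS q ℓ N (fun η => f η ^ 2) ≤
        c * (ℓ : ℝ) *
          ∑ i ∈ Finset.Icc (1 : ℤ) (N : ℤ), avg q ℓ N (condVar q ℓ N i f) := by
  set L := log (min q (1 - q))⁻¹
  have hL : 0 ≤ L :=
    log_nonneg (one_le_inv_iff₀.2 ⟨lt_min hq0 (by linarith), (min_le_left _ _).trans hq1.le⟩)
  refine ⟨18 + 16 * L, by positivity, fun ℓ N hℓ _ f => ?_⟩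
  have hℓ' : (1 : ℝ) ≤ ℓ := by exact_mod_cast hℓ
  have hblock : ∀ i ∈ Icc (1 : ℤ) N, avg q ℓ N (condEnt q ℓ N i fun η => f η ^ 2) ≤
      (18 + 16 * L) * ℓ * avg q ℓ N (condVar q ℓ N i f) := fun i hi => by
    have hvar := avg_nonneg hq0 hq1 (condVar_nonneg hq0 hq1 hi f)
    calc avg q ℓ N (condEnt q ℓ N i fun η => f η ^ 2)
        ≤ (18 + 8 * ((ℓ + 1) * L)) * avg q ℓ N (condVar q ℓ N i f) := by
          rw [← avg_const_mul]; exact avg_mono hq0 hq1 (condEnt_sq_le_condVar hq0 hq1 hi f)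
      _ ≤ _ := mul_le_mul_of_nonneg_right (by nlinarith [mul_le_mul_of_nonneg_left hℓ' hL]) hvar
  calc entS q ℓ N (fun η => f η ^ 2)
      ≤ ∑ i ∈ Icc (1 : ℤ) N, avg q ℓ N (condEnt q ℓ N i fun η => f η ^ 2) :=
        entS_le_sum_avg_condEnt hq0 hq1 fun η => sq_nonneg _
    _ ≤ _ := (sum_le_sum hblock).trans_eq (mul_sum _ _ _).symm
end

section
/- Let p̂ ∈ (1/2, 1). There exist constants C, c > 0 depending only on p̂ such that for all integers 1 ≤ k ≤ n and every function f on {0,1}^{{1,…,n}} depending only on the coordinates {1,…,k}: | π̂_n^0(f) − π̂_n^1(f) | ≤ C·‖f‖_∞·e^{−c(n−k)}, where π̂_n^ε is the Bernoulli(p̂) product measure on {0,1}^{{1,…,n}} conditioned on the parity-ε class. -/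
open scoped Classical BigOperators

/-- The interval `I_n = {1, …, n}`. -/
noncomputable def In (n : ℕ) : Finset ℤ := Finset.Icc 1 (n : ℤ)

/-- Configurations on `I_n`. -/
abbrev T (n : ℕ) : Type := ↥(In n) → Bool

/-- The state of site `x` (sites outside `I_n` are irrelevant and set to `1`). -/
noncomputable def getT (n : ℕ) (η : T n) (x : ℤ) : Bool :=
  if h : x ∈ In n then η ⟨x, h⟩ else true

/-- The Bernoulli(`p̂`) weight of a configuration. -/
noncomputable def wT (phat : ℝ) (n : ℕ) (η : T n) : ℝ :=
  ∏ y : ↥(In n), if η y then phat else 1 - phat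

/-- The number of infected (zero) sites of `η`. -/
noncomputable def nZeros (n : ℕ) (η : T n) : ℕ :=
  (Finset.univ.filter fun y : ↥(In n) => η y = false).card

/-- The parity class `Ω_n^ε` (`ε ∈ {0,1}`): configurations whose number of zeros is `≡ ε`. -/
noncomputable def ParSet (n : ℕ) (ε : ℕ) : Finset (T n) :=
  Finset.univ.filter fun η => nZeros n η % 2 = ε

/-- The mean of `f` under the Bernoulli(`p̂`) product measure conditioned on the
(sub)set `A` of configurations. -/
noncomputable def cavg (phat : ℝ) (n : ℕ) (A : Finset (T n)) (f : T n → ℝ) : ℝ :=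
  (∑ η ∈ A, wT phat n η * f η) / (∑ η ∈ A, wT phat n η)

/-! Write `δ = 2p̂ - 1` and `σ(η) = (-1)^#zeros(η)`, so that `1_{Ω_n^ε} = (1 ± σ)/2`. Hence
`π̂(f 1_{Ω_n^ε}) = (π̂(f) ± π̂(σ f))/2`, and in particular `π̂(Ω_n^ε) = (1 ± δ^n)/2`. Since `σ` is
a product of independent signs of mean `δ` and `f` only sees the first `k` coordinates,
`|π̂(σ f)| ≤ ‖f‖_∞ δ^(n-k)`, and the difference of the two conditioned means is
`2(π̂(σ f) - π̂(f) δ^n)/(1 - δ^(2n))`. -/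

section ProductSums

variable {ι : Type*} [Fintype ι] [DecidableEq ι]

lemma sum_prod_bool_eq_pow (h : Bool → ℝ) :
    ∑ η : ι → Bool, ∏ y, h (η y) = (h true + h false) ^ Fintype.card ι := by
  rw [← Fintype.prod_sum fun _ b => h b]
  simp only [Fintype.sum_bool, Finset.prod_const, Finset.card_univ]

lemma abs_sum_prod_mul_le (h : Bool → ℝ) (g : (ι → Bool) → ℝ) (M : ℝ) (hg : ∀ η, |g η| ≤ M) :
    |∑ η : ι → Bool, (∏ y, h (η y)) * g η| ≤ (|h true| + |h false|) ^ Fintype.card ι * M := by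
  calc |∑ η : ι → Bool, (∏ y, h (η y)) * g η|
      ≤ ∑ η : ι → Bool, (∏ y, |h (η y)|) * M := by
        refine (Finset.abs_sum_le_sum_abs _ _).trans (Finset.sum_le_sum fun η _ => ?_)
        rw [abs_mul, Finset.abs_prod]
        exact mul_le_mul_of_nonneg_left (hg η) (by positivity)
    _ = (|h true| + |h false|) ^ Fintype.card ι * M := by
        rw [← Finset.sum_mul, sum_prod_bool_eq_pow fun b => |h b|]

lemma sum_prod_mul_eq_of_dependsOn (P : ι → Prop) [DecidablePred P] (h : Bool → ℝ)
    (g : (ι → Bool) → ℝ) (hg : ∀ η η' : ι → Bool, (∀ y, P y → η y = η' y) → g η = g η') :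
    ∑ η : ι → Bool, (∏ y, h (η y)) * g η =
      (∑ a : {y // P y} → Bool, (∏ y, h (a y)) *
          g ((Equiv.piEquivPiSubtypeProd P fun _ => Bool).symm (a, fun _ => true))) *
        (h true + h false) ^ Fintype.card {y // ¬ P y} := by
  set e := Equiv.piEquivPiSubtypeProd P fun _ => Bool
  have split : ∀ a b, (∏ y, h (e.symm (a, b) y)) * g (e.symm (a, b)) =
      ((∏ y, h (a y)) * g (e.symm (a, fun _ => true))) * ∏ y, h (b y) := by
    intro a b
    have hprod : ∏ y, h (e.symm (a, b) y) = (∏ y, h (a y)) * ∏ y, h (b y) := by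
      rw [← Fintype.prod_subtype_mul_prod_subtype P]
      congr 1 <;> refine Finset.prod_congr rfl fun y _ => ?_ <;>
        simp [e, Equiv.piEquivPiSubtypeProd_symm_apply, y.2]
    have hgab : g (e.symm (a, b)) = g (e.symm (a, fun _ => true)) :=
      hg _ _ fun y hy => by simp [e, Equiv.piEquivPiSubtypeProd_symm_apply, hy]
    rw [hprod, hgab]
    ring
  rw [← e.symm.sum_comp, Fintype.sum_prod_type]
  simp_rw [split]
  rw [← Finset.sum_mul_sum, sum_prod_bool_eq_pow]

lemma abs_sum_prod_mul_le_of_dependsOn (P : ι → Prop) [DecidablePred P] (h : Bool → ℝ)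
    (g : (ι → Bool) → ℝ) (hg : ∀ η η' : ι → Bool, (∀ y, P y → η y = η' y) → g η = g η')
    (M : ℝ) (hM : ∀ η, |g η| ≤ M) :
    |∑ η : ι → Bool, (∏ y, h (η y)) * g η| ≤
      (|h true| + |h false|) ^ Fintype.card {y // P y} * M *
        |h true + h false| ^ Fintype.card {y // ¬ P y} := by
  rw [sum_prod_mul_eq_of_dependsOn P h g hg, abs_mul, abs_pow]
  gcongr
  exact abs_sum_prod_mul_le h _ M fun _ => hM _

end ProductSums

lemma card_In (n : ℕ) : Fintype.card ↥(In n) = n := by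
  rw [Fintype.card_coe, In, Int.card_Icc]
  omega

lemma card_In_not_le (n k : ℕ) (hkn : k ≤ n) :
    Fintype.card {y : ↥(In n) // ¬ (y : ℤ) ≤ k} = n - k := by
  have hIoc : Finset.map (Function.Embedding.subtype _) {y : ↥(In n) | ¬ (y : ℤ) ≤ k} =
      Finset.Ioc (k : ℤ) n := by
    ext x
    simp only [Finset.mem_map, Finset.mem_filter, Finset.mem_univ, true_and,
      Function.Embedding.subtype_apply, Subtype.exists, exists_and_right, exists_eq_right]
    simp only [In, Finset.mem_Icc, Finset.mem_Ioc, exists_prop]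
    omega
  rw [Fintype.card_subtype, ← Finset.card_map, hIoc, Int.card_Ioc]
  omega

lemma neg_one_pow_nZeros_mul_wT (p : ℝ) (n : ℕ) (η : T n) :
    (-1 : ℝ) ^ nZeros n η * wT p n η = ∏ y, if η y then p else p - 1 := by
  rw [nZeros, ← Finset.prod_const, Finset.prod_filter, wT, ← Finset.prod_mul_distrib]
  exact Finset.prod_congr rfl fun y _ => by cases η y <;> simp

lemma sum_wT (p : ℝ) (n : ℕ) : ∑ η : T n, wT p n η = 1 := by
  simp only [wT]
  rw [sum_prod_bool_eq_pow fun b => if b then p else 1 - p]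
  simp only [↓reduceIte, Bool.false_eq_true, add_sub_cancel, one_pow]

lemma sum_neg_one_pow_nZeros_mul_wT (p : ℝ) (n : ℕ) :
    ∑ η : T n, (-1 : ℝ) ^ nZeros n η * wT p n η = (2 * p - 1) ^ n := by
  simp only [neg_one_pow_nZeros_mul_wT]
  rw [sum_prod_bool_eq_pow fun b => if b then p else p - 1, card_In]
  simp only [↓reduceIte, Bool.false_eq_true]
  ring

lemma sum_parSet (n ε : ℕ) (hε : ε < 2) (F : T n → ℝ) :
    ∑ η ∈ ParSet n ε, F η = (∑ η, F η + (-1) ^ ε * ∑ η, (-1 : ℝ) ^ nZeros n η * F η) / 2 := by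
  rw [ParSet, Finset.sum_filter, Finset.mul_sum, ← Finset.sum_add_distrib, Finset.sum_div]
  refine Finset.sum_congr rfl fun η _ => ?_
  rcases Nat.mod_two_eq_zero_or_one (nZeros n η) with h | h
  · rw [(Nat.even_iff.2 h).neg_one_pow, h]
    interval_cases ε <;> norm_num
  · rw [(Nat.odd_iff.2 h).neg_one_pow, h]
    interval_cases ε <;> norm_num

lemma cavg_parSet (p : ℝ) (n ε : ℕ) (hε : ε < 2) (f : T n → ℝ) :
    cavg p n (ParSet n ε) f =
      (∑ η, wT p n η * f η + (-1) ^ ε * ∑ η, (-1 : ℝ) ^ nZeros n η * (wT p n η * f η)) /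
        (1 + (-1) ^ ε * (2 * p - 1) ^ n) := by
  rw [cavg, sum_parSet n ε hε, sum_parSet n ε hε, sum_wT, sum_neg_one_pow_nZeros_mul_wT,
    div_div_div_cancel_right₀ two_ne_zero]

lemma abs_sum_wT_mul_le {p : ℝ} (hp0 : 0 ≤ p) (hp1 : p ≤ 1) (n : ℕ) (f : T n → ℝ) (M : ℝ)
    (hM : ∀ η, |f η| ≤ M) : |∑ η, wT p n η * f η| ≤ M := by
  have h := abs_sum_prod_mul_le (fun b => if b then p else 1 - p) f M hM
  simp only [↓reduceIte, Bool.false_eq_true] at h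
  rwa [abs_of_nonneg hp0, abs_of_nonneg (sub_nonneg.2 hp1), add_sub_cancel, one_pow,
    one_mul] at h

lemma abs_sum_neg_one_pow_nZeros_mul_wT_mul_le {p : ℝ} (hp0 : 0 ≤ p) (hp1 : p ≤ 1)
    {n k : ℕ} (hkn : k ≤ n) (f : T n → ℝ)
    (hf : ∀ η η' : T n, (∀ y : ↥(In n), (y : ℤ) ≤ (k : ℤ) → η y = η' y) → f η = f η')
    (M : ℝ) (hM : ∀ η, |f η| ≤ M) :
    |∑ η, (-1 : ℝ) ^ nZeros n η * (wT p n η * f η)| ≤ M * |2 * p - 1| ^ (n - k) := by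
  simp only [← mul_assoc, neg_one_pow_nZeros_mul_wT]
  have h := abs_sum_prod_mul_le_of_dependsOn (fun y : ↥(In n) => (y : ℤ) ≤ k)
    (fun b => if b then p else p - 1) f hf M hM
  simp only [↓reduceIte, Bool.false_eq_true] at h
  rwa [abs_of_nonneg hp0, abs_of_nonpos (sub_nonpos.2 hp1), card_In_not_le n k hkn,
    show p + -(p - 1) = 1 by ring, one_pow, one_mul, show p + (p - 1) = 2 * p - 1 by ring] at h

lemma abs_add_div_sub_sub_div_le {A B d r s M : ℝ} (hd : 0 ≤ d) (hdr : d ≤ r) (hds : d ≤ s)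
    (hs : s < 1) (hA : |A| ≤ M) (hB : |B| ≤ M * r) :
    |(A + B) / (1 + d) - (A - B) / (1 - d)| ≤ 4 / (1 - s ^ 2) * M * r := by
  have hd1 : d < 1 := hds.trans_lt hs
  have hden : 1 - s ^ 2 ≤ 1 - d ^ 2 := by nlinarith
  have hnum : |2 * (B - A * d)| ≤ 4 * M * r := by
    have hAd : |A * d| ≤ M * r := by
      rw [abs_mul, abs_of_nonneg hd]
      exact mul_le_mul hA hdr hd ((abs_nonneg A).trans hA)
    rw [abs_mul, abs_two]
    linarith [abs_sub B (A * d)]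
  calc |(A + B) / (1 + d) - (A - B) / (1 - d)| = |2 * (B - A * d)| / (1 - d ^ 2) := by
        rw [div_sub_div _ _ (by linarith) (by linarith), abs_div,
          abs_of_pos (by nlinarith : 0 < (1 + d) * (1 - d))]
        ring_nf
    _ ≤ 4 * M * r / (1 - s ^ 2) :=
        div_le_div₀ (by linarith [abs_nonneg (2 * (B - A * d))]) hnum (by nlinarith) hden
    _ = 4 / (1 - s ^ 2) * M * r := by ring

/-- let `p̂ ∈ (1/2, 1)`. There are constants `C, c > 0` depending only on
`p̂` such that for all `1 ≤ k ≤ n` and every `f` on `{0,1}^{1,…,n}` depending only on the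
coordinates `{1,…,k}`: `|π̂_n^0(f) - π̂_n^1(f)| ≤ C ‖f‖_∞ e^{-c(n-k)}`, where `π̂_n^ε` is
the Bernoulli(`p̂`) product measure conditioned on the parity-`ε` class. -/
theorem stmt17 (phat : ℝ) (h2 : 1 / 2 < phat) (h1 : phat < 1) :
    ∃ C : ℝ, 0 < C ∧ ∃ c : ℝ, 0 < c ∧
      ∀ n k : ℕ, 1 ≤ k → k ≤ n → ∀ f : T n → ℝ,
        (∀ η η' : T n, (∀ y : ↥(In n), (y : ℤ) ≤ (k : ℤ) → η y = η' y) → f η = f η') →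
        ∀ M : ℝ, (∀ η : T n, |f η| ≤ M) →
          |cavg phat n (ParSet n 0) f - cavg phat n (ParSet n 1) f|
            ≤ C * M * Real.exp (-c * ((n : ℝ) - (k : ℝ))) := by
  set δ := 2 * phat - 1
  have hδ0 : 0 < δ := by linarith
  have hδ1 : δ < 1 := by linarith
  refine ⟨4 / (1 - δ ^ 2), div_pos four_pos (by nlinarith), -Real.log δ,
    neg_pos.2 (Real.log_neg hδ0 hδ1), fun n k hk hkn f hf M hM => ?_⟩
  have hexp : Real.exp (-(-Real.log δ) * ((n : ℝ) - k)) = δ ^ (n - k) := by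
    rw [neg_neg, ← Nat.cast_sub hkn, mul_comm, Real.exp_nat_mul, Real.exp_log hδ0]
  have hp0 : 0 ≤ phat := by linarith
  have hB := abs_sum_neg_one_pow_nZeros_mul_wT_mul_le hp0 h1.le hkn f hf M hM
  rw [abs_of_pos hδ0] at hB
  rw [hexp, cavg_parSet phat n 0 two_pos f, cavg_parSet phat n 1 one_lt_two f]
  simp only [pow_zero, one_mul, pow_one, neg_one_mul, ← sub_eq_add_neg]
  exact abs_add_div_sub_sub_div_le (by positivity)
    (pow_le_pow_of_le_one hδ0.le hδ1.le (Nat.sub_le n k))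
    (pow_le_of_le_one hδ0.le hδ1.le (by omega)) hδ1 (abs_sum_wT_mul_le hp0 h1.le n f M hM) hB
end
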